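/- arXiv:1807.09105 — 12 statements merged into one kernel-verified Lean document; each statement's English description precedes it below -/
import Mathlib

section
/- Let k be an algebraically closed field (of any characteristic) and let f ∈ k[x_1,…,x_n] be a non-constant polynomial. Then f is a factorially closed polynomial if and only if for every λ ∈ k the polynomial f − λ is irreducible in k[x_1,…,x_n]. -/
/-!
As `k` is algebraically closed, a nonconstant `f` is transcendental, so `aeval f : k[X] → k[f]`
is an isomorphism and every nonzero element of `k[f]` is `c * ∏ (f - a)` with `c ≠ 0`.
If every `f - a` is prime, a factor of such a product is a constant times a subproduct, hence
lies in `k[f]`. Conversely, a factorisation of `f - λ` whose factors lie in `k[f]` pulls back to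
a factorisation of `X - λ` in `k[X]`, which is trivial.
-/

open MvPolynomial

def Subalgebra.IsFactoriallyClosed {R A : Type*} [CommSemiring R] [Semiring A] [Algebra R A]
    (S : Subalgebra R A) : Prop :=
  ∀ g h : A, g ≠ 0 → h ≠ 0 → g * h ∈ S → g ∈ S ∧ h ∈ S

theorem IsAlgClosed.transcendental_of_notMem_range_algebraMap {k A : Type*} [Field k]
    [IsAlgClosed k] [CommRing A] [IsDomain A] [Algebra k A] {x : A}
    (hx : x ∉ Set.range (algebraMap k A)) : Transcendental k x := by
  intro hxalg
  have : Algebra.IsIntegral k (Algebra.adjoin k {x}) :=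
    Algebra.IsIntegral.adjoin (by simpa using hxalg.isIntegral)
  obtain ⟨c, hc⟩ := (IsAlgClosed.algebraMap_bijective_of_isIntegral
    (k := k) (K := Algebra.adjoin k {x})).2 ⟨x, Algebra.self_mem_adjoin_singleton k x⟩
  exact hx ⟨c, congrArg Subtype.val hc⟩

theorem Transcendental.irreducible_aeval_of_isFactoriallyClosed {R A : Type*} [CommRing R]
    [CommRing A] [Algebra R A] {x : A} (hx : Transcendental R x)
    (hS : (Algebra.adjoin R {x}).IsFactoriallyClosed) {p : Polynomial R} (hp : Irreducible p)
    (hpx : ¬IsUnit (Polynomial.aeval x p)) : Irreducible (Polynomial.aeval x p) := by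
  have hinj := transcendental_iff_injective.mp hx
  refine ⟨hpx, fun g h hgh => ?_⟩
  have hpx0 : Polynomial.aeval x p ≠ 0 := (map_ne_zero_iff _ hinj).mpr hp.ne_zero
  have hmem : g * h ∈ Algebra.adjoin R {x} := by
    rw [← hgh, Algebra.adjoin_singleton_eq_range_aeval]
    exact AlgHom.mem_range_self _ p
  obtain ⟨hg, hh⟩ := hS g h (left_ne_zero_of_mul (hgh ▸ hpx0))
    (right_ne_zero_of_mul (hgh ▸ hpx0)) hmem
  rw [Algebra.adjoin_singleton_eq_range_aeval, AlgHom.mem_range] at hg hh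
  obtain ⟨P, rfl⟩ := hg
  obtain ⟨Q, rfl⟩ := hh
  have hPQ : p = P * Q := hinj (by rw [hgh, map_mul])
  exact (hp.isUnit_or_isUnit hPQ).imp (IsUnit.map _) (IsUnit.map _)

namespace MvPolynomial

variable {σ k : Type*} [Field k]

theorem C_mem_adjoin (f : MvPolynomial σ k) (c : k) : C c ∈ Algebra.adjoin k {f} :=
  (Algebra.adjoin k {f}).algebraMap_mem c

theorem sub_C_mem_adjoin (f : MvPolynomial σ k) (c : k) : f - C c ∈ Algebra.adjoin k {f} :=
  sub_mem (Algebra.self_mem_adjoin_singleton k f) (C_mem_adjoin f c)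

theorem not_isUnit_sub_C {f : MvPolynomial σ k} (hf : ∀ c, f ≠ C c) (c : k) :
    ¬IsUnit (f - C c) := by
  intro hu
  obtain ⟨d, -, hd⟩ := isUnit_iff_eq_C_of_isReduced.mp hu
  exact hf (d + c) (by rw [C_add, ← hd, sub_add_cancel])

theorem transcendental_of_forall_ne_C [IsAlgClosed k] {f : MvPolynomial σ k}
    (hf : ∀ c, f ≠ C c) : Transcendental k f :=
  IsAlgClosed.transcendental_of_notMem_range_algebraMap fun ⟨c, hc⟩ => hf c hc.symm

theorem mem_adjoin_of_dvd_prod_sub_C {f : MvPolynomial σ k} (hprime : ∀ a, Prime (f - C a))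
    (s : Multiset k) {g : MvPolynomial σ k} (hg : g ∣ (s.map fun a => f - C a).prod) :
    g ∈ Algebra.adjoin k {f} := by
  induction s using Multiset.induction generalizing g with
  | empty =>
    obtain ⟨c, -, rfl⟩ := isUnit_iff_eq_C_of_isReduced.mp (isUnit_of_dvd_one (by simpa using hg))
    exact C_mem_adjoin f c
  | cons a t ih =>
    obtain ⟨m, hm⟩ := hg
    rw [Multiset.map_cons, Multiset.prod_cons] at hm
    have hp0 := (hprime a).ne_zero
    rcases (hprime a).dvd_or_dvd ⟨_, hm.symm⟩ with ⟨g', rfl⟩ | ⟨m', rfl⟩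
    · have hrest : (t.map fun a => f - C a).prod = g' * m :=
        mul_left_cancel₀ hp0 (by rw [hm, mul_assoc])
      exact mul_mem (sub_C_mem_adjoin f a) (ih ⟨m, hrest⟩)
    · have hrest : (t.map fun a => f - C a).prod = g * m' :=
        mul_left_cancel₀ hp0 (by rw [hm, mul_left_comm])
      exact ih ⟨m', hrest⟩

theorem aeval_eq_C_leadingCoeff_mul_prod_roots [IsAlgClosed k] (f : MvPolynomial σ k)
    (P : Polynomial k) :
    Polynomial.aeval f P = C P.leadingCoeff * (P.roots.map fun a => f - C a).prod := by
  conv_lhs => rw [(IsAlgClosed.splits P).eq_prod_roots]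
  simp [map_multiset_prod, Multiset.map_map, algebraMap_eq]

theorem isFactoriallyClosed_adjoin_of_forall_prime [IsAlgClosed k] {f : MvPolynomial σ k}
    (hprime : ∀ a, Prime (f - C a)) : (Algebra.adjoin k {f}).IsFactoriallyClosed := by
  suffices h : ∀ q ∈ Algebra.adjoin k {f}, q ≠ 0 → ∀ g, g ∣ q → g ∈ Algebra.adjoin k {f} from
    fun g h' hg hh hmem => ⟨h _ hmem (mul_ne_zero hg hh) g (dvd_mul_right g h'),
      h _ hmem (mul_ne_zero hg hh) h' (dvd_mul_left h' g)⟩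
  intro q hq hq0 g hg
  rw [Algebra.adjoin_singleton_eq_range_aeval, AlgHom.mem_range] at hq
  obtain ⟨P, rfl⟩ := hq
  have hlc : IsUnit (C P.leadingCoeff : MvPolynomial σ k) :=
    (Polynomial.leadingCoeff_ne_zero.mpr (by rintro rfl; exact hq0 (map_zero _))).isUnit.map C
  rw [aeval_eq_C_leadingCoeff_mul_prod_roots, hlc.dvd_mul_left] at hg
  exact mem_adjoin_of_dvd_prod_sub_C hprime _ hg

end MvPolynomial

/-- **Theorem 2.6.** Over an algebraically closed field `k` (of any characteristic), a
non-constant polynomial `f ∈ k[x_1,…,x_n]` is factorially closed iff `f - λ` is irreducible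
for every `λ ∈ k`. -/
theorem factoriallyClosed_iff_all_fibers_irreducible
    (k : Type*) [Field k] [IsAlgClosed k] (n : ℕ)
    (f : MvPolynomial (Fin n) k) (hf : ∀ c : k, f ≠ C c) :
    (∀ g h : MvPolynomial (Fin n) k, g ≠ 0 → h ≠ 0 → g * h ∈ Algebra.adjoin k {f} →
        g ∈ Algebra.adjoin k {f} ∧ h ∈ Algebra.adjoin k {f})
      ↔ ∀ lam : k, Irreducible (f - C lam) := by
  constructor
  · intro hfc lam
    have hfiber : f - C lam = Polynomial.aeval f (Polynomial.X - Polynomial.C lam) := by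
      simp [algebraMap_eq]
    rw [hfiber]
    exact (transcendental_of_forall_ne_C hf).irreducible_aeval_of_isFactoriallyClosed hfc
      (Polynomial.irreducible_X_sub_C lam) (hfiber ▸ not_isUnit_sub_C hf lam)
  · exact fun hirr => isFactoriallyClosed_adjoin_of_forall_prime fun a => (hirr a).prime
end

section
/- Let R be an integral domain of characteristic zero and let f_1, …, f_n ∈ R[x_1,…,x_n] be polynomials such that the determinant of the Jacobian matrix J(F) = (∂f_i/∂x_j)_{1≤i,j≤n} is a nonzero constant in R, and Q(R)[f_i] ∩ R[x_1,…,x_n] = R[f_i] for each 1 ≤ i ≤ n. Then each f_i is a closed polynomial. -/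
/-!
Over the fraction field `K`, let `J` be the Jacobian matrix of `F` and
`D j = ∑ k, adj(J) k j • ∂ k`, so that `D j (F l) = δ l j · det J`. For `j ≠ i` the derivation
`D j` kills `K[F i]`, hence (in characteristic zero, by looking at a monic relation of minimal
degree) every `G` integral over `K[F i]`. Then `adj(J) * J = det J • 1` gives `∇G = u ∇(F i)`.
Since the partials of `F i` generate the unit ideal, also `∇u = v ∇(F i)`, so by induction on the
degree `u = p(F i)`, and `G - P(F i)` is constant for a primitive `P` of `p`. The hypothesis
`Q(R)[f i] ∩ R[x] = R[f i]` brings this back to `R`.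
-/

open MvPolynomial

theorem Polynomial.derivative_surjective {K : Type*} [Field K] [CharZero K] :
    Function.Surjective (Polynomial.derivative : Polynomial K → Polynomial K) := by
  intro p
  induction p using Polynomial.induction_on' with
  | add p q hp hq =>
    obtain ⟨P, rfl⟩ := hp
    obtain ⟨Q, rfl⟩ := hq
    exact ⟨P + Q, map_add _ P Q⟩
  | monomial n a =>
    refine ⟨Polynomial.monomial (n + 1) (a / (n + 1)), ?_⟩
    rw [Polynomial.derivative_monomial, Nat.add_sub_cancel, Nat.cast_add_one,
      div_mul_cancel₀ a (Nat.cast_add_one_ne_zero n)]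

namespace Derivation

theorem map_aeval_of_forall_mem_eq_zero {K A : Type*} [CommRing K] [CommRing A] [Algebra K A]
    (D : Derivation K A A) {S : Subalgebra K A} (hS : ∀ s ∈ S, D s = 0) (x : A) (p : Polynomial S) :
    D (Polynomial.aeval x p) = Polynomial.aeval x (Polynomial.derivative p) * D x := by
  induction p using Polynomial.induction_on' with
  | add p q hp hq => simp only [map_add, hp, hq, add_mul]
  | monomial n s =>
    simp only [Polynomial.aeval_monomial, Subalgebra.algebraMap_apply, leibniz, leibniz_pow,
      smul_eq_mul, nsmul_eq_mul, hS s s.2, mul_zero, add_zero, Polynomial.derivative_monomial,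
      MulMemClass.coe_mul, SubringClass.coe_natCast]
    ring

theorem map_eq_zero_of_isIntegral {K A : Type*} [Field K] [CharZero K] [CommRing A] [IsDomain A]
    [Algebra K A] (D : Derivation K A A) {S : Subalgebra K A} (hS : ∀ s ∈ S, D s = 0) {x : A}
    (hx : IsIntegral S x) : D x = 0 := by
  obtain ⟨p, hmonic, hp⟩ := hx
  replace hp : Polynomial.aeval x p = 0 := hp
  induction hd : p.natDegree using Nat.strong_induction_on generalizing p with
  | _ d ih =>
  by_contra hDx
  have hd0 : d ≠ 0 := by
    rintro rfl
    rw [hmonic.natDegree_eq_zero.1 hd, map_one] at hp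
    exact one_ne_zero hp
  have hp' : Polynomial.aeval x (Polynomial.derivative p) = 0 := by
    have := D.map_aeval_of_forall_mem_eq_zero hS x p
    rw [hp, map_zero, eq_comm, mul_eq_zero] at this
    exact this.resolve_right hDx
  -- `(derivative p) / d` is a monic relation of smaller degree
  set q := Polynomial.C (algebraMap K S (d : K)⁻¹) * Polynomial.derivative p
  have hq_le : q.natDegree ≤ d - 1 :=
    (Polynomial.natDegree_C_mul_le _ _).trans (hd ▸ Polynomial.natDegree_derivative_le p)
  have hq_monic : q.Monic := by
    refine Polynomial.monic_of_natDegree_le_of_coeff_eq_one _ hq_le ?_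
    rw [Polynomial.coeff_C_mul, Polynomial.coeff_derivative, ← Nat.cast_add_one,
      Nat.sub_add_cancel (Nat.one_le_iff_ne_zero.2 hd0), ← hd, hmonic.coeff_natDegree, one_mul,
      hd, ← _root_.map_natCast (algebraMap K S), ← map_mul,
      inv_mul_cancel₀ (Nat.cast_ne_zero.2 hd0), map_one]
  have hq : Polynomial.aeval x q = 0 := by
    rw [map_mul, hp', mul_zero]
  exact hDx (ih _ (by omega) q hq_monic hq rfl)

end Derivation

namespace MvPolynomial

section Calculus

variable {R σ : Type*}

theorem pderiv_pderiv_comm [CommRing R] (k l : σ) (p : MvPolynomial σ R) :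
    pderiv k (pderiv l p) = pderiv l (pderiv k p) := by
  classical
  have hcomm : ⁅pderiv k, pderiv l⁆ = (0 : Derivation R (MvPolynomial σ R) _) :=
    derivation_ext fun j => by
      rw [Derivation.commutator_apply, pderiv_X, pderiv_X]
      simp [Pi.single_apply, apply_ite]
  have := congr($hcomm p)
  rwa [Derivation.commutator_apply, Derivation.zero_apply, sub_eq_zero] at this

theorem totalDegree_pderiv_lt [CommSemiring R] {i : σ} {p : MvPolynomial σ R}
    (h : pderiv i p ≠ 0) : (pderiv i p).totalDegree < p.totalDegree := by
  have key : ∀ m ∈ (pderiv i p).support, (m.sum fun _ e => e) < p.totalDegree := by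
    intro m hm
    rw [mem_support_iff, coeff_pderiv] at hm
    have := le_totalDegree (mem_support_iff.2 (left_ne_zero_of_mul hm))
    rwa [Finsupp.sum_add_index' (fun _ => rfl) (fun _ _ _ => rfl),
      Finsupp.sum_single_index rfl] at this
  obtain ⟨m, hm⟩ := support_nonempty.2 h
  exact (Finset.sup_lt_iff (lt_of_le_of_lt bot_le (key m hm))).2 key

theorem eq_C_of_forall_pderiv_eq_zero [CommRing R] [IsDomain R] [CharZero R]
    {p : MvPolynomial σ R} (h : ∀ k, pderiv k p = 0) : p = C (coeff 0 p) := by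
  classical
  ext m
  rw [coeff_C]
  split_ifs with hm
  · rw [hm]
  obtain ⟨k, hk⟩ : ∃ k, m k ≠ 0 := by
    by_contra! hall
    exact hm (Finsupp.ext hall).symm
  have hle : Finsupp.single k 1 ≤ m := Finsupp.single_le_iff.2 (Nat.one_le_iff_ne_zero.2 hk)
  have := coeff_pderiv (i := k) p (m - Finsupp.single k 1)
  rw [h k, coeff_zero, tsub_add_cancel_of_le hle, eq_comm, mul_eq_zero] at this
  refine this.resolve_right ?_
  rw [Finsupp.tsub_apply, Finsupp.single_eq_same, ← Nat.cast_add_one, Nat.sub_add_cancel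
    (Nat.one_le_iff_ne_zero.2 hk)]
  exact Nat.cast_ne_zero.2 hk

theorem pderiv_mul_pderiv_comm_of_pderiv_eq_mul [CommRing R] {F G u : MvPolynomial σ R}
    (hG : ∀ k, pderiv k G = u * pderiv k F) (k l : σ) :
    pderiv l u * pderiv k F = pderiv k u * pderiv l F := by
  have h := pderiv_pderiv_comm l k G
  rw [hG, hG, pderiv_mul, pderiv_mul, pderiv_pderiv_comm l k F] at h
  exact add_right_cancel h

theorem pderiv_eq_mul_of_pderiv_eq_mul [CommRing R] [Fintype σ] {F G u : MvPolynomial σ R}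
    (b : σ → MvPolynomial σ R) (hb : ∑ k, b k * pderiv k F = 1)
    (hG : ∀ k, pderiv k G = u * pderiv k F) (k : σ) :
    pderiv k u = (∑ l, b l * pderiv l u) * pderiv k F := by
  calc pderiv k u = (∑ l, b l * pderiv l F) * pderiv k u := by rw [hb, one_mul]
    _ = ∑ l, b l * pderiv l u * pderiv k F := by
        rw [Finset.sum_mul]
        refine Finset.sum_congr rfl fun l _ => ?_
        rw [mul_assoc, mul_comm (pderiv l F), ← pderiv_mul_pderiv_comm_of_pderiv_eq_mul hG k l,
          mul_assoc]
    _ = (∑ l, b l * pderiv l u) * pderiv k F := Finset.sum_mul _ _ _ |>.symm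

theorem mem_adjoin_singleton_of_pderiv_eq_mul {K : Type*} [Field K] [CharZero K] [Fintype σ]
    {F : MvPolynomial σ K} (b : σ → MvPolynomial σ K) (hb : ∑ k, b k * pderiv k F = 1)
    {G u : MvPolynomial σ K} (hG : ∀ k, pderiv k G = u * pderiv k F) :
    G ∈ Algebra.adjoin K {F} := by
  induction hd : G.totalDegree using Nat.strong_induction_on generalizing G u with
  | _ d ih =>
  have hu : u ∈ Algebra.adjoin K {F} := by
    by_cases hu0 : u = 0
    · exact hu0 ▸ Subalgebra.zero_mem _
    obtain ⟨k, hk⟩ : ∃ k, pderiv k F ≠ 0 := by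
      by_contra! hF
      simp [hF] at hb
    have hGk : pderiv k G ≠ 0 := hG k ▸ mul_ne_zero hu0 hk
    have hdeg : u.totalDegree < d := hd ▸
      (totalDegree_le_of_dvd_of_isDomain (hG k ▸ dvd_mul_right u _) hGk).trans_lt
        (totalDegree_pderiv_lt hGk)
    exact ih _ hdeg (pderiv_eq_mul_of_pderiv_eq_mul b hb hG) rfl
  obtain ⟨p, rfl⟩ := (Polynomial.aeval F).mem_range.1
    (Algebra.adjoin_singleton_eq_range_aeval K F ▸ hu)
  obtain ⟨P, hP⟩ := Polynomial.derivative_surjective p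
  have hconst : ∀ k, pderiv k (G - Polynomial.aeval F P) = 0 := fun k => by
    rw [map_sub, Derivation.map_aeval, hP, hG, smul_eq_mul, sub_self]
  rw [← sub_add_cancel G (Polynomial.aeval F P), eq_C_of_forall_pderiv_eq_zero hconst,
    ← algebraMap_eq]
  exact add_mem (Subalgebra.algebraMap_mem _ _)
    (Algebra.adjoin_singleton_eq_range_aeval K F ▸ ⟨P, rfl⟩)

end Calculus

section Jacobian

variable {R σ : Type*} [CommRing R]

noncomputable def jacobian (F : σ → MvPolynomial σ R) : Matrix σ σ (MvPolynomial σ R) :=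
  Matrix.of fun i j => pderiv j (F i)

variable [Fintype σ] [DecidableEq σ]

theorem det_jacobian_map {S : Type*} [CommRing S] (φ : R →+* S) (F : σ → MvPolynomial σ R) :
    (jacobian fun i => map φ (F i)).det = map φ (jacobian F).det := by
  rw [RingHom.map_det (map φ)]
  congr 1
  ext i j
  simp [jacobian, pderiv_map]

noncomputable def jacobianDerivation (F : σ → MvPolynomial σ R) (j : σ) :
    Derivation R (MvPolynomial σ R) (MvPolynomial σ R) :=
  ∑ k, (jacobian F).adjugate k j • pderiv k

theorem jacobianDerivation_apply (F : σ → MvPolynomial σ R) (j : σ) (p : MvPolynomial σ R) :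
    jacobianDerivation F j p = ∑ k, (jacobian F).adjugate k j * pderiv k p := by
  rw [jacobianDerivation, ← Derivation.coeFnAddMonoidHom_apply, map_sum, Finset.sum_apply]
  rfl

theorem jacobianDerivation_apply_component (F : σ → MvPolynomial σ R) (l j : σ) :
    jacobianDerivation F j (F l) = if l = j then (jacobian F).det else 0 := by
  have := congr_fun₂ (jacobian F).mul_adjugate l j
  rw [Matrix.mul_apply, Matrix.smul_apply, Matrix.one_apply, smul_eq_mul, mul_ite, mul_one,
    mul_zero] at this
  rw [jacobianDerivation_apply, ← this]
  exact Finset.sum_congr rfl fun k _ => mul_comm _ _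

theorem sum_jacobianDerivation_mul_pderiv (F : σ → MvPolynomial σ R) (p : MvPolynomial σ R)
    (k : σ) : ∑ j, jacobianDerivation F j p * pderiv k (F j) = (jacobian F).det * pderiv k p := by
  calc ∑ j, jacobianDerivation F j p * pderiv k (F j)
      = ∑ l, pderiv l p * ((jacobian F).adjugate * jacobian F) l k := by
        simp only [jacobianDerivation_apply, Finset.sum_mul, Matrix.mul_apply, Finset.mul_sum]
        rw [Finset.sum_comm]
        exact Finset.sum_congr rfl fun l _ => Finset.sum_congr rfl fun j _ => by
          simp only [jacobian, Matrix.of_apply]; ring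
    _ = (jacobian F).det * pderiv k p := by
        simp [Matrix.adjugate_mul, Matrix.one_apply, mul_comm]

end Jacobian

variable {K σ : Type*} [Field K] [CharZero K] [Fintype σ] [DecidableEq σ]

theorem mem_adjoin_of_isIntegral_of_det_jacobian_eq_C {F : σ → MvPolynomial σ K} {c : K}
    (hc : c ≠ 0) (hdet : (jacobian F).det = C c) (i : σ) {G : MvPolynomial σ K}
    (hG : IsIntegral (Algebra.adjoin K {F i}) G) : G ∈ Algebra.adjoin K {F i} := by
  set D := jacobianDerivation F
  have hDF : ∀ l j, D j (F l) = if l = j then C c else 0 := fun l j => by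
    rw [jacobianDerivation_apply_component, hdet]
  have hDG : ∀ j ≠ i, D j G = 0 := fun j hj => (D j).map_eq_zero_of_isIntegral
    (fun s hs => Derivation.eqOn_adjoin (D2 := 0)
      (fun _ hx => by rw [Set.mem_singleton_iff.1 hx, hDF, if_neg hj.symm]; rfl) hs) hG
  have hGrad : ∀ k, pderiv k G = (C c⁻¹ * D i G) * pderiv k (F i) := fun k => by
    have := sum_jacobianDerivation_mul_pderiv F G k
    rw [Finset.sum_eq_single i (fun j _ hj => by rw [hDG j hj, zero_mul])
      (fun h => absurd (Finset.mem_univ i) h), hdet] at this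
    rw [mul_assoc, this, ← mul_assoc, ← C_mul, inv_mul_cancel₀ hc, C_1, one_mul]
  refine mem_adjoin_singleton_of_pderiv_eq_mul (fun k => C c⁻¹ * (jacobian F).adjugate k i) ?_
    hGrad
  simp_rw [mul_assoc, ← Finset.mul_sum, ← jacobianDerivation_apply]
  rw [hDF, if_pos rfl, ← C_mul, inv_mul_cancel₀ hc, C_1]

end MvPolynomial

theorem IsIntegral.map_adjoin_singleton {R K A B : Type*} [CommRing R] [CommRing K] [CommRing A]
    [CommRing B] [Algebra R K] [Algebra R A] [Algebra K B] [Algebra R B] [IsScalarTower R K B]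
    (φ : A →ₐ[R] B) {a x : A} (hx : IsIntegral (Algebra.adjoin R {a}) x) :
    IsIntegral (Algebra.adjoin K {φ a}) (φ x) := by
  have hle : (Algebra.adjoin R {a}).map φ ≤ (Algebra.adjoin K {φ a}).restrictScalars R := by
    rw [AlgHom.map_adjoin_singleton]
    exact Algebra.adjoin_le
      (Set.singleton_subset_iff.2 (Algebra.self_mem_adjoin_singleton K (φ a)))
  exact hx.map_of_comp_eq ((φ.toRingHom.comp (Algebra.adjoin R {a}).val.toRingHom).codRestrict _
    fun y => hle ⟨y, y.2, rfl⟩) φ.toRingHom rfl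

/-- **Proposition 2.2.** Let `R` be an integral domain of characteristic zero and
`f_1, …, f_n ∈ R[x_1,…,x_n]` with `det J(F) ∈ R \ {0}` a nonzero constant and
`Q(R)[f_i] ∩ R[X] = R[f_i]` for each `i`.  Then each `f_i` is a closed polynomial. -/
theorem closed_of_jacobian_det_nonzero_constant
    (R : Type*) [CommRing R] [IsDomain R] [CharZero R] (n : ℕ)
    (f : Fin n → MvPolynomial (Fin n) R)
    (hjac : ∃ r : R, r ≠ 0 ∧ (Matrix.of fun i j => pderiv j (f i)).det = C r)
    (hcap : ∀ i : Fin n, ∀ g : MvPolynomial (Fin n) R,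
      MvPolynomial.map (algebraMap R (FractionRing R)) g ∈
          Algebra.adjoin (FractionRing R)
            {MvPolynomial.map (algebraMap R (FractionRing R)) (f i)} →
        g ∈ Algebra.adjoin R {f i}) :
    ∀ i : Fin n, ∀ g : MvPolynomial (Fin n) R,
      IsIntegral (Algebra.adjoin R {f i}) g → g ∈ Algebra.adjoin R {f i} := by
  intro i g hg
  obtain ⟨r, hr, hdet⟩ := hjac
  let K := FractionRing R
  refine hcap i g (mem_adjoin_of_isIntegral_of_det_jacobian_eq_C
    (F := fun j => map (algebraMap R K) (f j)) (c := algebraMap R K r) ?_ ?_ i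
    (hg.map_adjoin_singleton (mapAlgHom (Algebra.ofId R K))))
  · exact (map_ne_zero_iff _ (IsFractionRing.injective R K)).2 hr
  · rw [det_jacobian_map, jacobian, hdet, map_C]
end

section
/- Let R be a UFD and let f ∈ R[x_1,…,x_n] be a non-constant polynomial. Denote by c(g) the greatest common divisor in R of the coefficients of a polynomial g ∈ R[x_1,…,x_n]. Then the following are equivalent: (1) c(f − f(0,…,0)) is a unit of R; (2) Q(R)[f] ∩ R[x_1,…,x_n] = R[f]. -/
/-!
If `c(f - f(0))` is a unit, then `f` stays non-constant modulo every prime `p` of `R`, hence is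
transcendental over the domain `R/(p)`. So if `p g = Q(f)` with `Q ∈ R[T]`, reducing modulo `p`
gives `Q ≡ 0`, i.e. `Q = p Q₁` and `g = Q₁(f)`. An element of `Q(R)[f] ∩ R[x]` becomes `b g = Q(f)`
after clearing denominators, and peeling off the prime factors of `b` one at a time shows
`g ∈ R[f]`. Conversely, if `d` divides every coefficient of `f - f(0)`, then
`g = (f - f(0))/d` lies in `Q(R)[f] ∩ R[x] = R[f]`, say `g = Q(f)`, and since `f` is
transcendental over `R` this forces `d Q = T - f(0)`; comparing linear coefficients, `d` is a unit.
-/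

open MvPolynomial

namespace MvPolynomial

variable {σ R : Type*}

/-- The content `c(p)` is a unit. -/
def IsPrimitive [CommSemiring R] (p : MvPolynomial σ R) : Prop :=
  ∀ d : R, (∀ m, d ∣ p.coeff m) → IsUnit d

theorem map_polynomial_aeval [CommSemiring R] {S : Type*} [CommSemiring S] (φ : R →+* S)
    (f : MvPolynomial σ R) (Q : Polynomial R) :
    map φ (Polynomial.aeval f Q) = Polynomial.aeval (map φ f) (Q.map φ) :=
  Polynomial.map_aeval_eq_aeval_map (map_comp_C φ).symm Q f

theorem map_mem_adjoin_map [CommSemiring R] {S : Type*} [CommSemiring S] (φ : R →+* S)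
    {f g : MvPolynomial σ R} (hg : g ∈ Algebra.adjoin R {f}) :
    map φ g ∈ Algebra.adjoin S {map φ f} := by
  rw [Algebra.adjoin_singleton_eq_range_aeval] at hg ⊢
  obtain ⟨Q, rfl⟩ := hg
  exact ⟨Q.map φ, (map_polynomial_aeval φ f Q).symm⟩

theorem transcendental_of_ne_C_coeff_zero [CommRing R] [IsDomain R] {f : MvPolynomial σ R}
    (hf : f ≠ C (f.coeff 0)) : Transcendental R f := by
  classical
  obtain ⟨i, hi⟩ : f.vars.Nonempty :=
    Finset.nonempty_iff_ne_empty.2 (mt vars_eq_empty_iff_eq_C.1 hf)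
  -- `f` as a polynomial in the variable `i`, with coefficients in the other variables
  let e := (renameEquiv R (Equiv.optionSubtypeNe i).symm).trans
    (optionEquivLeft R {j // j ≠ i})
  have hdeg : (e f).natDegree ≠ 0 := by
    have := degreeOf_rename_of_injective (Equiv.optionSubtypeNe i).symm.injective i (p := f)
    simp only [Equiv.optionSubtypeNe_symm_self] at this
    simpa [e, this, ← mem_vars_iff_degreeOf_ne_zero] using hi
  have he : Transcendental (MvPolynomial {j // j ≠ i} R) (e f) :=
    Polynomial.transcendental _ hdeg <| mem_nonZeroDivisors_of_ne_zero <|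
      Polynomial.leadingCoeff_ne_zero.2 <| by rintro h; simp [h] at hdeg
  exact fun h => he.restrictScalars (C_injective _ _) (h.algHom e.toAlgHom)

theorem IsPrimitive.map_mk_ne_zero [CommRing R] {g : MvPolynomial σ R} (hg : g.IsPrimitive)
    {p : R} (hp : ¬IsUnit p) : map (Ideal.Quotient.mk (Ideal.span {p})) g ≠ 0 := by
  refine fun h => hp (hg p fun m => ?_)
  rw [← Ideal.mem_span_singleton, ← Ideal.Quotient.eq_zero_iff_mem, ← coeff_map, h, coeff_zero]

theorem IsPrimitive.transcendental_map_mk [CommRing R] [IsDomain R] {f : MvPolynomial σ R}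
    (hf : (f - C (f.coeff 0)).IsPrimitive) {p : R} (hp : Prime p) :
    Transcendental (R ⧸ Ideal.span {p}) (map (Ideal.Quotient.mk (Ideal.span {p})) f) := by
  have : (Ideal.span {p}).IsPrime := (Ideal.span_singleton_prime hp.ne_zero).2 hp
  refine transcendental_of_ne_C_coeff_zero (sub_ne_zero.1 ?_)
  simpa [coeff_map] using hf.map_mk_ne_zero hp.not_isUnit

theorem mem_adjoin_of_C_mul_mem_adjoin_of_transcendental [CommRing R] [IsDomain R] {p : R}
    (hp : p ≠ 0) {f g : MvPolynomial σ R}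
    (hf : Transcendental (R ⧸ Ideal.span {p}) (map (Ideal.Quotient.mk (Ideal.span {p})) f))
    (hg : C p * g ∈ Algebra.adjoin R {f}) : g ∈ Algebra.adjoin R {f} := by
  rw [Algebra.adjoin_singleton_eq_range_aeval] at hg ⊢
  obtain ⟨Q, hQ⟩ := hg
  change Polynomial.aeval f Q = C p * g at hQ
  have hQp : Q.map (Ideal.Quotient.mk (Ideal.span {p})) = 0 := by
    refine transcendental_iff.1 hf _ ?_
    rw [← map_polynomial_aeval, hQ, map_mul, map_C,
      Ideal.Quotient.eq_zero_iff_mem.2 (Ideal.mem_span_singleton_self p), C_0, zero_mul]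
  obtain ⟨Q₁, rfl⟩ : Polynomial.C p ∣ Q := (Polynomial.C_dvd_iff_dvd_coeff p Q).2 fun i => by
    rw [← Ideal.mem_span_singleton, ← Ideal.Quotient.eq_zero_iff_mem, ← Polynomial.coeff_map,
      hQp, Polynomial.coeff_zero]
  rw [map_mul, Polynomial.aeval_C, algebraMap_eq] at hQ
  exact ⟨Q₁, mul_left_cancel₀ (C_ne_zero.2 hp) hQ⟩

theorem IsPrimitive.mem_adjoin_of_C_mul_mem_adjoin [CommRing R] [IsDomain R]
    [UniqueFactorizationMonoid R] {f g : MvPolynomial σ R} (hf : (f - C (f.coeff 0)).IsPrimitive)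
    {r : R} (hr : r ≠ 0) (hg : C r * g ∈ Algebra.adjoin R {f}) : g ∈ Algebra.adjoin R {f} := by
  induction r using UniqueFactorizationMonoid.induction_on_prime with
  | h₁ => exact absurd rfl hr
  | h₂ u hu =>
    obtain ⟨v, hv⟩ := hu.exists_left_inv
    have hg' := Subalgebra.mul_mem _ (Subalgebra.algebraMap_mem _ v) hg
    rwa [algebraMap_eq, ← mul_assoc, ← C_mul, hv, C_1, one_mul] at hg'
  | h₃ a p ha hp ih =>
    rw [C_mul, mul_assoc] at hg
    exact ih ha (mem_adjoin_of_C_mul_mem_adjoin_of_transcendental hp.ne_zero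
      (hf.transcendental_map_mk hp) hg)

theorem exists_C_mul_mem_adjoin_of_map_mem_adjoin [CommRing R] {K : Type*} [CommRing K]
    [Algebra R K] [IsFractionRing R K] {f g : MvPolynomial σ R}
    (hg : map (algebraMap R K) g ∈ Algebra.adjoin K {map (algebraMap R K) f}) :
    ∃ b ∈ nonZeroDivisors R, C b * g ∈ Algebra.adjoin R {f} := by
  rw [Algebra.adjoin_singleton_eq_range_aeval] at hg
  obtain ⟨P, hP⟩ := hg
  change Polynomial.aeval _ P = _ at hP
  obtain ⟨b, hb, hspec⟩ := IsLocalization.integerNormalization_spec (nonZeroDivisors R) P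
  refine ⟨b, hb, ?_⟩
  have key : map (algebraMap R K)
      (Polynomial.aeval f (IsLocalization.integerNormalization (nonZeroDivisors R) P)) =
      map (algebraMap R K) (C b * g) := by
    rw [map_polynomial_aeval, hspec]
    simp [Algebra.smul_def, hP]
  rw [← map_injective _ (IsFractionRing.injective R K) key]
  exact Polynomial.aeval_mem_adjoin_singleton R f

theorem isUnit_of_C_mul_eq_sub_C_coeff_zero [CommRing R] [IsDomain R] {f g : MvPolynomial σ R}
    (hf : f ≠ C (f.coeff 0)) {d : R} (hd : C d * g = f - C (f.coeff 0))
    (hg : g ∈ Algebra.adjoin R {f}) : IsUnit d := by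
  rw [Algebra.adjoin_singleton_eq_range_aeval] at hg
  obtain ⟨Q, rfl⟩ := hg
  have hQ : Polynomial.C d * Q = Polynomial.X - Polynomial.C (f.coeff 0) := by
    refine transcendental_iff_injective.1 (transcendental_of_ne_C_coeff_zero hf) ?_
    simpa [algebraMap_eq] using hd
  exact IsUnit.of_mul_eq_one _ (by simpa using congrArg (Polynomial.coeff · 1) hQ)

theorem map_mem_adjoin_map_of_C_mul_eq_sub [CommRing R] {K : Type*} [Field K] (φ : R →+* K)
    {f g : MvPolynomial σ R} {d : R} (hd : φ d ≠ 0) (h : C d * g = f - C (f.coeff 0)) :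
    map φ g ∈ Algebra.adjoin K {map φ f} := by
  have h' := congrArg (map φ) h
  rw [map_mul, map_sub, map_C, map_C] at h'
  have : map φ g = Polynomial.aeval (map φ f)
      (Polynomial.C (φ d)⁻¹ * (Polynomial.X - Polynomial.C (φ (f.coeff 0)))) := by
    rw [map_mul, map_sub, Polynomial.aeval_X, Polynomial.aeval_C, Polynomial.aeval_C,
      algebraMap_eq, ← h', ← mul_assoc, ← C_mul, inv_mul_cancel₀ hd, C_1, one_mul]
  exact this ▸ Polynomial.aeval_mem_adjoin_singleton K _

end MvPolynomial

/-- **Lemma 1.3.** Let `R` be a UFD and `f ∈ R[x_1,…,x_n]` non-constant.  Then the content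
`c(f - f(0,…,0))` (the gcd of the coefficients) is a unit of `R` iff
`Q(R)[f] ∩ R[x_1,…,x_n] = R[f]`.  (That the coefficients of `f - f(0,…,0)` have a unit gcd
is expressed by saying that every common divisor of them is a unit.) -/
theorem content_isUnit_iff_adjoin_cap_eq
    (R : Type*) [CommRing R] [IsDomain R] [UniqueFactorizationMonoid R] (n : ℕ)
    (f : MvPolynomial (Fin n) R) (hf : ∀ r : R, f ≠ C r) :
    (∀ d : R, (∀ m : Fin n →₀ ℕ, d ∣ (f - C (f.coeff 0)).coeff m) → IsUnit d)
      ↔ ∀ g : MvPolynomial (Fin n) R,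
          MvPolynomial.map (algebraMap R (FractionRing R)) g ∈
              Algebra.adjoin (FractionRing R)
                {MvPolynomial.map (algebraMap R (FractionRing R)) f}
            ↔ g ∈ Algebra.adjoin R {f} := by
  refine ⟨fun hprim g => ⟨fun hg => ?_, map_mem_adjoin_map _⟩, fun h d hd => ?_⟩
  · obtain ⟨b, hb, hbg⟩ := exists_C_mul_mem_adjoin_of_map_mem_adjoin hg
    exact IsPrimitive.mem_adjoin_of_C_mul_mem_adjoin hprim (nonZeroDivisors.ne_zero hb) hbg
  · obtain ⟨g, hg⟩ := (C_dvd_iff_dvd_coeff d _).2 hd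
    have hd0 : d ≠ 0 := by
      rintro rfl
      exact hf _ (sub_eq_zero.1 (by simpa using hg))
    exact isUnit_of_C_mul_eq_sub_C_coeff_zero (hf _) hg.symm
      ((h g).1 (map_mem_adjoin_map_of_C_mul_eq_sub _ (by simpa using hd0) hg.symm))
end

section
/- Let R be an integral domain and let f ∈ R[x_1,…,x_n] be a non-constant polynomial. If f is a factorially closed polynomial, then f is a closed polynomial. -/
set_option synthInstance.maxHeartbeats 400000
open MvPolynomial

/-- **Lemma 1.1 (2).** Over an integral domain `R`, a non-constant factorially closed
polynomial `f ∈ R[x_1,…,x_n]` is a closed polynomial, i.e. `R[f]` is integrally closed in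
`R[x_1,…,x_n]`. -/
theorem closed_of_factoriallyClosed
    (R : Type*) [CommRing R] [IsDomain R] (n : ℕ)
    (f : MvPolynomial (Fin n) R) (hf : ∀ r : R, f ≠ C r)
    (hfc : ∀ g h : MvPolynomial (Fin n) R, g ≠ 0 → h ≠ 0 → g * h ∈ Algebra.adjoin R {f} →
      g ∈ Algebra.adjoin R {f} ∧ h ∈ Algebra.adjoin R {f}) :
    ∀ g : MvPolynomial (Fin n) R,
      IsIntegral (Algebra.adjoin R {f}) g → g ∈ Algebra.adjoin R {f} := by
  intro g hg
  set A := Algebra.adjoin R {f} with hA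
  obtain ⟨p, hmon, hroot⟩ := hg
  have key : ∀ m : ℕ, ∀ p : Polynomial A, p.Monic → p.natDegree ≤ m →
      Polynomial.aeval g p = 0 → g ∈ A := by
    intro m
    induction m with
    | zero =>
      intro p hm hd hr
      have : p = 1 := Polynomial.eq_one_of_monic_natDegree_zero hm (Nat.le_zero.mp hd)
      rw [this] at hr
      simp at hr
    | succ m ih =>
      intro p hm hd hr
      by_cases hg0 : g = 0
      · rw [hg0]; exact zero_mem A
      by_cases hdm : p.natDegree ≤ m
      · exact ih p hm hdm hr
      have hdeq : p.natDegree = m + 1 := le_antisymm hd (Nat.succ_le_of_lt (Nat.lt_of_not_le hdm))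
      -- p = X * divX p + C (coeff 0)
      have hsplit : Polynomial.X * p.divX + Polynomial.C (p.coeff 0) = p :=
        Polynomial.X_mul_divX_add p
      have hev : g * Polynomial.aeval g p.divX + (algebraMap A (MvPolynomial (Fin n) R)) (p.coeff 0) = 0 := by
        have := hr
        rw [← hsplit] at this
        simp only [map_add, map_mul, Polynomial.aeval_X, Polynomial.aeval_C] at this
        exact this
      have hprod : g * Polynomial.aeval g p.divX = -((p.coeff 0 : MvPolynomial (Fin n) R)) := by
        rw [eq_neg_iff_add_eq_zero]
        simpa using hev
      -- divX p is monic
      have hmonX : p.divX.Monic := by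
        unfold Polynomial.Monic Polynomial.leadingCoeff
        have hnd : p.divX.natDegree = m := by
          rw [Polynomial.natDegree_divX_eq_natDegree_tsub_one, hdeq]
          omega
        rw [hnd, Polynomial.coeff_divX]
        have := hm
        unfold Polynomial.Monic Polynomial.leadingCoeff at this
        rwa [hdeq] at this
      by_cases hc0 : p.coeff 0 = 0
      · -- g * aeval g divX = 0, g ≠ 0, so aeval g divX = 0
        rw [hc0] at hprod
        simp at hprod
        rcases hprod with h | h
        · exact absurd h hg0
        · exact ih p.divX hmonX
            (by rw [Polynomial.natDegree_divX_eq_natDegree_tsub_one, hdeq]; omega) h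
      · -- product is nonzero and in A
        have hc0' : ((p.coeff 0 : MvPolynomial (Fin n) R)) ≠ 0 := by
          intro h
          exact hc0 (Subtype.ext h)
        have hne : g * Polynomial.aeval g p.divX ≠ 0 := by
          rw [hprod]; exact neg_ne_zero.mpr hc0'
        have hq : Polynomial.aeval g p.divX ≠ 0 := by
          intro h; rw [h, mul_zero] at hne; exact hne rfl
        have hmem : g * Polynomial.aeval g p.divX ∈ A := by
          rw [hprod]
          exact neg_mem (SetLike.coe_mem _)
        exact (hfc g (Polynomial.aeval g p.divX) hg0 hq hmem).1
  exact key p.natDegree p hmon le_rfl hroot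
end

section
/- Let n ≥ 2 be an integer and let f = x^n·z − y² − y ∈ ℂ[x,y,z] (a Danielewski surface polynomial). Then f is a factorially closed polynomial, i.e., for all nonzero g, h ∈ ℂ[x,y,z], gh ∈ ℂ[f] implies g ∈ ℂ[f] and h ∈ ℂ[f]. -/
/-!
Since `ℂ` is algebraically closed, every nonzero element of `ℂ[f]` is a nonzero constant times a
product of factors `f - c`. Each `f - c = x^n z - (y² + y + c)` is linear in `z` with coefficients
`x^n` and `y² + y + c` that have no common factor, hence prime in the UFD `ℂ[x,y,z]`. So the prime
factors of `g` and `h` are among the `f - c`, and their unit parts are constants.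
-/

open MvPolynomial

theorem Submonoid.mem_and_mem_of_mul_eq_unit_mul_prod {M : Type*} [CommMonoidWithZero M]
    [IsCancelMulZero M] {S : Submonoid M} (hS : ∀ u : M, IsUnit u → u ∈ S) {u : M}
    (hu : IsUnit u) :
    ∀ {s : Multiset M}, (∀ p ∈ s, Prime p ∧ p ∈ S) →
      ∀ {g h : M}, g * h = u * s.prod → g ∈ S ∧ h ∈ S := by
  intro s
  induction s using Multiset.induction_on with
  | empty =>
    intro _ g h hgh
    rw [Multiset.prod_zero, mul_one] at hgh
    exact ⟨hS g (isUnit_of_mul_isUnit_left (hgh ▸ hu)),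
      hS h (isUnit_of_mul_isUnit_right (hgh ▸ hu))⟩
  | cons p t ih =>
    intro hs g h hgh
    obtain ⟨hp, hpS⟩ := hs p (Multiset.mem_cons_self p t)
    have ht : ∀ q ∈ t, Prime q ∧ q ∈ S := fun q hq => hs q (Multiset.mem_cons_of_mem hq)
    have step : ∀ g h : M, p ∣ g → g * h = u * (p ::ₘ t).prod → g ∈ S ∧ h ∈ S := by
      rintro g h ⟨g', rfl⟩ hgh
      have hcancel : g' * h = u * t.prod := by
        apply mul_left_cancel₀ hp.ne_zero
        rw [← mul_assoc, hgh, Multiset.prod_cons, mul_left_comm]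
      obtain ⟨hg', hh⟩ := ih ht hcancel
      exact ⟨S.mul_mem hpS hg', hh⟩
    have hpgh : p ∣ g * h := ⟨u * t.prod, by rw [hgh, Multiset.prod_cons, mul_left_comm]⟩
    rcases hp.dvd_or_dvd hpgh with hpg | hph
    · exact step g h hpg hgh
    · exact (step h g hph (by rw [mul_comm, hgh])).symm

theorem Algebra.mem_adjoin_singleton_of_mul_mem {k A : Type*} [Field k] [IsAlgClosed k]
    [CommRing A] [IsDomain A] [Algebra k A] {f : A}
    (hunit : ∀ u : A, IsUnit u → u ∈ (⊥ : Subalgebra k A))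
    (hprime : ∀ c : k, Prime (f - algebraMap k A c)) {g h : A} (hgh0 : g * h ≠ 0)
    (hgh : g * h ∈ Algebra.adjoin k {f}) :
    g ∈ Algebra.adjoin k {f} ∧ h ∈ Algebra.adjoin k {f} := by
  rw [Algebra.adjoin_singleton_eq_range_aeval] at hgh
  obtain ⟨q, hq⟩ := hgh
  have hq0 : q ≠ 0 := by rintro rfl; exact hgh0 (by rw [← hq, map_zero])
  have hsplit : g * h = algebraMap k A q.leadingCoeff *
      (q.roots.map fun r => f - algebraMap k A r).prod := by
    rw [← hq]
    conv_lhs => rw [← Polynomial.C_leadingCoeff_mul_prod_multiset_X_sub_C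
      (IsAlgClosed.card_roots_eq_natDegree (p := q))]
    simp [map_multiset_prod, Multiset.map_map]
  have hS : ∀ u : A, IsUnit u → u ∈ Algebra.adjoin k {f} := fun u hu =>
    (bot_le : (⊥ : Subalgebra k A) ≤ _) (hunit u hu)
  refine Submonoid.mem_and_mem_of_mul_eq_unit_mul_prod (S := (Algebra.adjoin k {f}).toSubmonoid)
    hS ((Polynomial.leadingCoeff_ne_zero.mpr hq0).isUnit.map _) ?_ hsplit
  simp only [Multiset.mem_map]
  rintro _ ⟨r, -, rfl⟩
  exact ⟨hprime r, show _ ∈ Algebra.adjoin k {f} from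
    sub_mem (Algebra.self_mem_adjoin_singleton k f) (Subalgebra.algebraMap_mem _ r)⟩

theorem MvPolynomial.mem_bot_of_isUnit {σ R : Type*} [CommRing R] [IsReduced R]
    {P : MvPolynomial σ R} (hP : IsUnit P) : P ∈ (⊥ : Subalgebra R (MvPolynomial σ R)) := by
  obtain ⟨r, -, rfl⟩ := isUnit_iff_eq_C_of_isReduced.mp hP
  exact Algebra.mem_bot.mpr ⟨r, rfl⟩

theorem isRelPrime_X_one_pow (n : ℕ) (c : ℂ) :
    IsRelPrime ((X 1 : MvPolynomial (Fin 2) ℂ) ^ n) (-(X 0 ^ 2 + X 0 + C c)) := by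
  refine IsRelPrime.pow_left ((X_prime.irreducible.isRelPrime_iff_not_dvd).mpr ?_)
  rintro ⟨t, ht⟩
  have h := congrArg (fun P => (aeval (![Polynomial.X, 0] : Fin 2 → Polynomial ℂ) P).coeff 2) ht
  simp [Polynomial.coeff_X] at h

theorem prime_danielewski_sub_C (n : ℕ) (c : ℂ) :
    Prime (X 0 ^ n * X 2 - X 1 ^ 2 - X 1 - C c : MvPolynomial (Fin 3) ℂ) := by
  -- `e` views `ℂ[x,y,z]` as `ℂ[y,x][z]`: `x ↦ X 1`, `y ↦ X 0`, `z ↦ Polynomial.X`.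
  let e := (renameEquiv ℂ (Equiv.swap (0 : Fin 3) 2)).trans (finSuccEquiv ℂ 2)
  have he_X (i : Fin 3) : e (X i) = finSuccEquiv ℂ 2 (X (Equiv.swap 0 2 i)) := by
    simp only [e, AlgEquiv.trans_apply, renameEquiv_apply, rename_X]
  have he : e (X 0 ^ n * X 2 - X 1 ^ 2 - X 1 - C c) =
      Polynomial.C (X 1 ^ n) * Polynomial.X + Polynomial.C (-(X 0 ^ 2 + X 0 + C c)) := by
    simp only [map_sub, map_mul, map_pow, he_X, ← algebraMap_eq, AlgEquiv.commutes]
    rw [show Equiv.swap (0 : Fin 3) 2 0 = Fin.succ 1 from rfl,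
      show Equiv.swap (0 : Fin 3) 2 1 = Fin.succ 0 from rfl,
      show Equiv.swap (0 : Fin 3) 2 2 = 0 from rfl, finSuccEquiv_X_succ, finSuccEquiv_X_succ,
      finSuccEquiv_X_zero]
    simp only [Polynomial.algebraMap_apply, algebraMap_eq, map_neg, map_add, map_pow]
    ring
  rw [← MulEquiv.prime_iff e.toMulEquiv]
  show Prime (e _)
  rw [he, ← UniqueFactorizationMonoid.irreducible_iff_prime]
  exact Polynomial.irreducible_C_mul_X_add_C (pow_ne_zero _ (X_ne_zero 1))
    (isRelPrime_X_one_pow n c)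

theorem danielewski_factoriallyClosed_general (n : ℕ) :
    ∀ g h : MvPolynomial (Fin 3) ℂ, g ≠ 0 → h ≠ 0 →
      g * h ∈ Algebra.adjoin ℂ {(X 0 ^ n * X 2 - X 1 ^ 2 - X 1 : MvPolynomial (Fin 3) ℂ)} →
        g ∈ Algebra.adjoin ℂ {(X 0 ^ n * X 2 - X 1 ^ 2 - X 1 : MvPolynomial (Fin 3) ℂ)} ∧
        h ∈ Algebra.adjoin ℂ {(X 0 ^ n * X 2 - X 1 ^ 2 - X 1 : MvPolynomial (Fin 3) ℂ)} := by
  intro g h hg hh hgh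
  refine Algebra.mem_adjoin_singleton_of_mul_mem (fun _ => mem_bot_of_isUnit) (fun c => ?_)
    (mul_ne_zero hg hh) hgh
  rw [algebraMap_eq]
  exact prime_danielewski_sub_C n c

/-- **Example 2.7 (a).** For `n ≥ 2`, the Danielewski surface polynomial
`f = x^n z - y² - y ∈ ℂ[x,y,z]` is factorially closed: if `g h ∈ ℂ[f]` for nonzero
`g, h ∈ ℂ[x,y,z]`, then `g ∈ ℂ[f]` and `h ∈ ℂ[f]`.  Here `x = X 0`, `y = X 1`, `z = X 2`. -/
theorem danielewski_factoriallyClosed (n : ℕ) (hn : 2 ≤ n) :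
    ∀ g h : MvPolynomial (Fin 3) ℂ, g ≠ 0 → h ≠ 0 →
      g * h ∈ Algebra.adjoin ℂ {(X 0 ^ n * X 2 - X 1 ^ 2 - X 1 : MvPolynomial (Fin 3) ℂ)} →
        g ∈ Algebra.adjoin ℂ {(X 0 ^ n * X 2 - X 1 ^ 2 - X 1 : MvPolynomial (Fin 3) ℂ)} ∧
        h ∈ Algebra.adjoin ℂ {(X 0 ^ n * X 2 - X 1 ^ 2 - X 1 : MvPolynomial (Fin 3) ℂ)} :=
  danielewski_factoriallyClosed_general n
end

section
/- Let R be an integral domain containing ℚ and let D be an R-derivation on the polynomial ring R[x,y]. If the divergence div(D) = ∂D(x)/∂x + ∂D(y)/∂y equals 0, then there exists a non-constant polynomial f ∈ R[x,y] \ R such that D(f) = 0. -/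
/-!
Write `D = p ∂ₓ + q ∂ᵧ` with `p = D x`, `q = D y`. Vanishing divergence says exactly that
the form `q dx - p dy` is closed; since `ℚ ⊆ R`, polynomials can be integrated term by term,
so this form has a polynomial potential `f`. Then `D f = p q - q p = 0`, and `f` is non-constant unless
`p = q = 0`, in which case `f = x` works.
-/

open MvPolynomial

namespace MvPolynomial

variable {R σ : Type*} [CommRing R]

section Antideriv

variable [Algebra ℚ R]

/-- The formal antiderivative in the variable `i`, sending `m` to `m * X i / (deg_i m + 1)`. -/
noncomputable def antideriv (i : σ) : MvPolynomial σ R →ₗ[R] MvPolynomial σ R :=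
  Finsupp.lsum R (fun n => ((n i : ℚ) + 1)⁻¹ • monomial (n + Finsupp.single i 1)) ∘ₗ
    (AddMonoidAlgebra.coeffLinearEquiv R).toLinearMap

theorem antideriv_monomial (i : σ) (n : σ →₀ ℕ) (a : R) :
    antideriv i (monomial n a) = monomial (n + Finsupp.single i 1) (((n i : ℚ) + 1)⁻¹ • a) := by
  rw [← single_eq_monomial]
  exact (Finsupp.sum_single_index (by simp)).trans (by simp)

theorem pderiv_antideriv_self (i : σ) (g : MvPolynomial σ R) : pderiv i (antideriv i g) = g := by
  induction g using MvPolynomial.induction_on' with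
  | add p q hp hq => rw [map_add, map_add, hp, hq]
  | monomial n a =>
    have hn : ((n i + 1 : ℕ) : R) = algebraMap ℚ R ((n i : ℚ) + 1) := by simp
    rw [antideriv_monomial, pderiv_monomial, add_tsub_cancel_right, Finsupp.add_apply,
      Finsupp.single_eq_same, hn, mul_comm, ← Algebra.smul_def, smul_smul,
      mul_inv_cancel₀ (by positivity), one_smul]

theorem pderiv_antideriv_of_ne {i j : σ} (h : j ≠ i) (g : MvPolynomial σ R) :
    pderiv j (antideriv i g) = antideriv i (pderiv j g) := by
  induction g using MvPolynomial.induction_on' with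
  | add p q hp hq => rw [map_add, map_add, map_add, map_add, hp, hq]
  | monomial n a =>
    have hshift : n + Finsupp.single i 1 - Finsupp.single j 1
        = n - Finsupp.single j 1 + Finsupp.single i 1 := by
      ext b
      classical
      simp only [Finsupp.add_apply, Finsupp.tsub_apply, Finsupp.single_apply]
      split_ifs <;> grind
    rw [antideriv_monomial, pderiv_monomial, pderiv_monomial, antideriv_monomial, hshift,
      Finsupp.add_apply, Finsupp.single_eq_of_ne h, Finsupp.tsub_apply,
      Finsupp.single_eq_of_ne h.symm, add_zero, tsub_zero, smul_mul_assoc]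

theorem exists_pderiv_eq_of_pderiv_eq_pderiv {i j : σ} (hij : i ≠ j) {a b : MvPolynomial σ R}
    (hclosed : pderiv j a = pderiv i b) : ∃ f, pderiv i f = a ∧ pderiv j f = b := by
  refine ⟨antideriv i a + antideriv j (b - antideriv i (pderiv j a)), ?_, ?_⟩
  · rw [map_add, pderiv_antideriv_self, pderiv_antideriv_of_ne hij, map_sub,
      pderiv_antideriv_self, hclosed, sub_self, map_zero, add_zero]
  · rw [map_add, pderiv_antideriv_self, pderiv_antideriv_of_ne hij.symm, add_sub_cancel]

end Antideriv

theorem derivation_eq_sum_smul_pderiv [Fintype σ] [DecidableEq σ]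
    (D : Derivation R (MvPolynomial σ R) (MvPolynomial σ R)) :
    D = ∑ i, D (X i) • pderiv i :=
  derivation_ext fun j => by
    rw [← Derivation.coeFnAddMonoidHom_apply (∑ i, _), map_sum]
    simp [pderiv_X, Pi.single_apply, Derivation.coeFnAddMonoidHom_apply]

theorem forall_ne_C_of_pderiv_ne_zero [Nontrivial R] {f : MvPolynomial σ R} {i : σ}
    (h : pderiv i f ≠ 0) (r : R) : f ≠ C r := by
  rintro rfl
  exact h pderiv_C

end MvPolynomial

/-- **Lemma 3.1.** Let `R` be an integral domain containing `ℚ` and `D` an `R`-derivation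
on `R[x,y]`.  If `div(D) = ∂(D x)/∂x + ∂(D y)/∂y = 0`, then there is a non-constant
polynomial `f ∈ R[x,y] \ R` with `D f = 0`. -/
theorem exists_nonconstant_in_kernel_of_divergence_eq_zero
    (R : Type*) [CommRing R] [IsDomain R] [Algebra ℚ R]
    (D : Derivation R (MvPolynomial (Fin 2) R) (MvPolynomial (Fin 2) R))
    (hdiv : pderiv 0 (D (X 0)) + pderiv 1 (D (X 1)) = 0) :
    ∃ f : MvPolynomial (Fin 2) R, (∀ r : R, f ≠ C r) ∧ D f = 0 := by
  set p := D (X 0)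
  set q := D (X 1)
  have hD : ∀ g, D g = p * pderiv 0 g + q * pderiv 1 g := fun g => by
    rw [derivation_eq_sum_smul_pderiv D]
    simp [Fin.sum_univ_two, p, q]
  by_cases hpq : p = 0 ∧ q = 0
  · refine ⟨X 0, forall_ne_C_of_pderiv_ne_zero (i := 0) (by simp), ?_⟩
    rw [hD, hpq.1, hpq.2, zero_mul, zero_mul, add_zero]
  obtain ⟨f, hfx, hfy⟩ :=
    exists_pderiv_eq_of_pderiv_eq_pderiv (i := 0) (j := 1) (a := q) (b := -p) zero_ne_one (by rw [map_neg, eq_neg_iff_add_eq_zero, add_comm, hdiv])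
  refine ⟨f, ?_, by rw [hD, hfx, hfy]; ring⟩
  rcases not_and_or.mp hpq with hp | hq
  · exact forall_ne_C_of_pderiv_ne_zero (i := 1) (by rwa [hfy, neg_ne_zero])
  · exact forall_ne_C_of_pderiv_ne_zero (i := 0) (by rwa [hfx])
end

section
/- Let R be a UFD of characteristic zero and let D be a non-zero R-derivation on R[x,y]. If there exists a closed polynomial f ∈ R[x,y] \ R such that D(f) = 0 and Q(R)[f] ∩ R[x,y] = R[f], then the kernel R[x,y]^D equals R[f]. -/
/-!
If `D t ≠ 0` and `D` kills a subalgebra `B`, the chain rule turns a polynomial relation of `t`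
over `B` into one of smaller degree, so in characteristic zero `t` is transcendental over `B`.
As `R[x,y]` has transcendence degree `2`, the three elements `t, g, f` are algebraically
dependent; hence every `g ∈ ker D` is algebraic over `R[f]`, and clearing denominators some
`0 ≠ y ∈ R[f]` makes `y g` integral over `R[f]`, so `y g ∈ R[f]` as `f` is closed. Over
`K = Q(R)`, writing `g = b(f) / a(f)` with `a, b ∈ K[T]` coprime, Bezout makes `a(f)` a unit of
`K[x,y]`, i.e. a constant, so `g ∈ K[f] ∩ R[x,y] = R[f]`.
-/

open MvPolynomial

namespace Derivation

variable {R A : Type*} [CommRing R] [CommRing A] [Algebra R A] (D : Derivation R A A)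

theorem map_aeval_of_forall_apply_eq_zero {B : Subalgebra R A} (hB : ∀ b : B, D b = 0) (t : A)
    (p : Polynomial B) :
    D (Polynomial.aeval t p) = Polynomial.aeval t (Polynomial.derivative p) * D t := by
  induction p using Polynomial.induction_on' with
  | add p q hp hq => simp only [map_add, hp, hq, add_mul]
  | monomial n b =>
    simp only [Polynomial.aeval_monomial, Polynomial.derivative_monomial,
      Subalgebra.algebraMap_apply, leibniz, leibniz_pow, smul_eq_mul, nsmul_eq_mul, hB, mul_zero,
      add_zero, map_mul]
    push_cast
    ring

theorem transcendental_of_apply_ne_zero [IsDomain A] [CharZero A] {B : Subalgebra R A}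
    (hB : ∀ b : B, D b = 0) {t : A} (ht : D t ≠ 0) : Transcendental B t := by
  rintro ⟨p, hp0, hpt⟩
  induction hn : p.natDegree using Nat.strong_induction_on generalizing p with
  | _ n ih =>
  have hp't : Polynomial.aeval t (Polynomial.derivative p) = 0 := by
    have := D.map_aeval_of_forall_apply_eq_zero hB t p
    rw [hpt, map_zero, eq_comm, mul_eq_zero] at this
    exact this.resolve_right ht
  rcases eq_or_ne n 0 with rfl | hn0
  · rw [Polynomial.eq_C_of_natDegree_eq_zero hn, Polynomial.aeval_C,
      FaithfulSMul.algebraMap_eq_zero_iff] at hpt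
    exact hp0 (by rw [Polynomial.eq_C_of_natDegree_eq_zero hn, hpt, map_zero])
  · subst hn
    exact ih _ (Polynomial.natDegree_derivative_lt hn0) _ (Polynomial.derivative_ne_zero.mpr hn0)
      hp't rfl

theorem isAlgebraic_adjoin_singleton_of_apply_eq_zero [IsDomain A] [CharZero A] (hD : D ≠ 0)
    (htrdeg : Algebra.trdeg R A ≤ 2) {f g : A} (hf : Transcendental R f) (hDf : D f = 0)
    (hDg : D g = 0) : IsAlgebraic (Algebra.adjoin R {f}) g := by
  obtain ⟨t, ht⟩ : ∃ t, D t ≠ 0 := by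
    by_contra! h
    exact hD (Derivation.ext h)
  have : Nontrivial R := (algebraMap R A).domain_nontrivial
  let y : Option (Fin 1) → A := fun o => o.elim g ![f]
  have hyD : ∀ b : Algebra.adjoin R (Set.range y), D b = 0 := by
    refine fun b => D.eqOn_adjoin (D2 := 0) ?_ b.2
    rintro _ ⟨o | i, rfl⟩
    · exact hDg
    · simpa [y, Fin.fin_one_eq_zero i] using hDf
  have hy : ¬ AlgebraicIndependent R y := by
    intro hind
    have := (AlgebraicIndependent.option_iff.mpr
      ⟨hind, D.transcendental_of_apply_ne_zero hyD ht⟩).lift_cardinalMk_le_trdeg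
    simp only [Cardinal.mk_fintype, Fintype.card_option, Fintype.card_unique, Nat.reduceAdd,
      Nat.cast_ofNat, Cardinal.lift_ofNat, Cardinal.lift_uzero] at this
    exact absurd (this.trans htrdeg) (by norm_num)
  rw [AlgebraicIndependent.option_iff, algebraicIndependent_iff_transcendental, not_and,
    Matrix.range_cons_empty] at hy
  exact not_not.mp (hy hf)

end Derivation

namespace MvPolynomial

variable {σ : Type*}

theorem transcendental_of_forall_ne_C_s14 {R : Type*} [CommRing R] [IsDomain R]
    {f : MvPolynomial σ R} (hf : ∀ r, f ≠ C r) : Transcendental R f := by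
  let K := FractionRing R
  have hinj : Function.Injective (algebraMap R K) := IsFractionRing.injective R K
  let π : MvPolynomial σ R →ₐ[R] MvPolynomial σ K := mapAlgHom (Algebra.ofId R K)
  have hvars : (π f).vars ≠ ∅ := by
    rw [show π f = map (algebraMap R K) f from rfl, vars_map_of_injective _ hinj]
    exact fun h => hf _ (vars_eq_empty_iff_eq_C.mp h)
  rw [Transcendental, ← isAlgebraic_algHom_iff π (map_injective _ hinj)]
  refine Transcendental.restrictScalars hinj fun halg => hvars ?_
  -- a nonconstant element algebraic over the field `K` would give a nonconstant unit
  have hunit : IsUnit (π f - C (coeff 0 (π f))) := by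
    refine (halg.isIntegral.sub isIntegral_algebraMap).isUnit fun h => hvars ?_
    rw [sub_eq_zero.mp h, algebraMap_eq, vars_C]
  obtain ⟨r, -, hr⟩ := isUnit_iff_eq_C_of_isReduced.mp hunit
  rw [sub_eq_iff_eq_add.mp hr, ← C_add, vars_C]

theorem mem_adjoin_singleton_of_mul_mem {K : Type*} [Field K] {f a g : MvPolynomial σ K}
    (ha : a ∈ Algebra.adjoin K {f}) (ha0 : a ≠ 0) (hag : a * g ∈ Algebra.adjoin K {f}) :
    g ∈ Algebra.adjoin K {f} := by
  classical
  rw [Algebra.adjoin_singleton_eq_range_aeval] at ha hag ⊢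
  obtain ⟨α, rfl⟩ := ha
  obtain ⟨β, hβ⟩ := hag
  obtain ⟨α', β', hα, hβ', hcop⟩ := extract_gcd α β
  have hd : Polynomial.aeval f (gcd α β) ≠ 0 := fun h => ha0 (by
    rw [AlgHom.toRingHom_eq_coe, RingHom.coe_coe, hα, map_mul, h, zero_mul])
  have hrel : Polynomial.aeval f α' * g = Polynomial.aeval f β' := by
    refine mul_left_cancel₀ hd ?_
    rw [← mul_assoc, ← map_mul, ← hα, ← map_mul, ← hβ']
    exact hβ.symm
  obtain ⟨u, v, huv⟩ := (gcd_isUnit_iff_isRelPrime.mp hcop).isCoprime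
  have hunit : IsUnit (Polynomial.aeval f α') := by
    refine IsUnit.of_mul_eq_one (Polynomial.aeval f u + Polynomial.aeval f v * g) ?_
    have := congrArg (Polynomial.aeval f) huv
    rw [map_add, map_mul, map_mul, map_one, ← hrel] at this
    linear_combination this
  obtain ⟨c, hc0, hc⟩ := isUnit_iff_eq_C_of_isReduced.mp hunit
  refine ⟨Polynomial.C c⁻¹ * β', ?_⟩
  rw [AlgHom.toRingHom_eq_coe, RingHom.coe_coe, map_mul, Polynomial.aeval_C, ← hrel, hc,
    algebraMap_eq, ← mul_assoc, ← C_mul, inv_mul_cancel₀ hc0.ne_zero, C_1, one_mul]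

theorem map_mem_adjoin_singleton_map {R S : Type*} [CommRing R] [CommRing S] [Algebra R S]
    {f g : MvPolynomial σ R} (hg : g ∈ Algebra.adjoin R {f}) :
    map (algebraMap R S) g ∈ Algebra.adjoin S {map (algebraMap R S) f} := by
  induction hg using Algebra.adjoin_induction with
  | mem x hx =>
    rw [Set.mem_singleton_iff.mp hx]
    exact Algebra.self_mem_adjoin_singleton S _
  | algebraMap r =>
    rw [algebraMap_eq, map_C, ← algebraMap_eq]
    exact Subalgebra.algebraMap_mem _ _
  | add x y _ _ hx hy => rw [map_add]; exact add_mem hx hy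
  | mul x y _ _ hx hy => rw [map_mul]; exact mul_mem hx hy

end MvPolynomial

theorem kernel_eq_adjoin_of_closed_annihilated_general
    (R : Type*) [CommRing R] [IsDomain R] [CharZero R]
    (D : Derivation R (MvPolynomial (Fin 2) R) (MvPolynomial (Fin 2) R)) (hD : D ≠ 0)
    (f : MvPolynomial (Fin 2) R) (hf : ∀ r : R, f ≠ C r)
    (hclosed : ∀ g : MvPolynomial (Fin 2) R,
      IsIntegral (Algebra.adjoin R {f}) g → g ∈ Algebra.adjoin R {f})
    (hcap : ∀ g : MvPolynomial (Fin 2) R,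
      MvPolynomial.map (algebraMap R (FractionRing R)) g ∈
          Algebra.adjoin (FractionRing R)
            {MvPolynomial.map (algebraMap R (FractionRing R)) f} →
        g ∈ Algebra.adjoin R {f})
    (hDf : D f = 0) :
    ∀ g : MvPolynomial (Fin 2) R, D g = 0 ↔ g ∈ Algebra.adjoin R {f} := by
  intro g
  refine ⟨fun hDg => ?_, fun hg => D.eqOn_adjoin (D2 := 0) (Set.eqOn_singleton.mpr hDf) hg⟩
  have htrdeg : Algebra.trdeg R (MvPolynomial (Fin 2) R) ≤ 2 := by simp
  obtain ⟨y, hy0, hyg⟩ := (D.isAlgebraic_adjoin_singleton_of_apply_eq_zero hD htrdeg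
    (transcendental_of_forall_ne_C_s14 hf) hDf hDg).exists_integral_multiple
  have hyg_mem : (y : MvPolynomial (Fin 2) R) * g ∈ Algebra.adjoin R {f} := hclosed _ hyg
  have hinj := map_injective (σ := Fin 2) _ (IsFractionRing.injective R (FractionRing R))
  refine hcap g (mem_adjoin_singleton_of_mul_mem (map_mem_adjoin_singleton_map y.2) ?_ ?_)
  · exact (map_ne_zero_iff _ hinj).mpr (Subtype.coe_ne_coe.mpr hy0)
  · rw [← map_mul]
    exact map_mem_adjoin_singleton_map hyg_mem

/-- **Lemma 3.2.** Let `R` be a UFD of characteristic zero and `D` a non-zero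
`R`-derivation on `R[x,y]`.  If there is a closed polynomial `f ∈ R[x,y] \ R` with
`D f = 0` and `Q(R)[f] ∩ R[x,y] = R[f]`, then `R[x,y]^D = R[f]`. -/
theorem kernel_eq_adjoin_of_closed_annihilated
    (R : Type*) [CommRing R] [IsDomain R] [UniqueFactorizationMonoid R] [CharZero R]
    (D : Derivation R (MvPolynomial (Fin 2) R) (MvPolynomial (Fin 2) R)) (hD : D ≠ 0)
    (f : MvPolynomial (Fin 2) R) (hf : ∀ r : R, f ≠ C r)
    (hclosed : ∀ g : MvPolynomial (Fin 2) R,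
      IsIntegral (Algebra.adjoin R {f}) g → g ∈ Algebra.adjoin R {f})
    (hcap : ∀ g : MvPolynomial (Fin 2) R,
      MvPolynomial.map (algebraMap R (FractionRing R)) g ∈
          Algebra.adjoin (FractionRing R)
            {MvPolynomial.map (algebraMap R (FractionRing R)) f} →
        g ∈ Algebra.adjoin R {f})
    (hDf : D f = 0) :
    ∀ g : MvPolynomial (Fin 2) R, D g = 0 ↔ g ∈ Algebra.adjoin R {f} :=
  kernel_eq_adjoin_of_closed_annihilated_general R D hD f hf hclosed hcap hDf
end

section
/- Let R be a UFD containing ℚ, let m, n ∈ ℤ_{≥0}, and let a, b ∈ R \ {0} with gcd(a,b) = 1. Let D be the R-derivation on R[x,y] given by D = a·y^m ∂/∂x + b·x^n ∂/∂y. Then the kernel R[x,y]^D equals R[ b(m+1)x^{n+1} − a(n+1)y^{m+1} ]. -/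
/-!
Put `A = b(m+1)`, `B = -a(n+1)` and `w = A x^(n+1) + B y^(m+1)`; then `D w = 0`, so `R[w]` lies in
the kernel. Conversely let `D f = 0`. Comparing coefficients of `D f` shows that the coefficient of
`x^i y^j` in `f` vanishes unless `n + 1 ∣ i`, and that `e t u`, the coefficient of
`x^(t(n+1)) y^(u(m+1))`, satisfies `(u+1) A e t (u+1) = (t+1) B e (t+1) u`. Iterating gives
`A^s e 0 s = B^s e s 0`, so coprimality of `A` and `B` yields `e s 0 = A^s λ_s`. Then
`f - Σ λ_s w^s` is in the kernel and has no monomials free of `y`, and the recurrence, read upwards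
in the `y`-degree, forces it to vanish.
-/

open MvPolynomial

noncomputable section

namespace YmXnDerivation

variable {R : Type*} [CommRing R]

/-- The exponent of `x^p y^q`, where `x = X 0` and `y = X 1`. -/
def xy (p q : ℕ) : Fin 2 →₀ ℕ := Finsupp.single 0 p + Finsupp.single 1 q

@[simp] lemma xy_apply_zero (p q : ℕ) : xy p q 0 = p := by simp [xy]

@[simp] lemma xy_apply_one (p q : ℕ) : xy p q 1 = q := by simp [xy]

lemma fin_two_ext_iff {d e : Fin 2 →₀ ℕ} : d = e ↔ d 0 = e 0 ∧ d 1 = e 1 := by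
  simp [Finsupp.ext_iff, Fin.forall_fin_two]

lemma eq_xy (d : Fin 2 →₀ ℕ) : d = xy (d 0) (d 1) := by simp [fin_two_ext_iff]

lemma xy_zero_right (p : ℕ) : xy p 0 = Finsupp.single 0 p := by simp [fin_two_ext_iff]

lemma single_zero_le_xy {k p q : ℕ} : Finsupp.single 0 k ≤ xy p q ↔ k ≤ p := by
  simp [Finsupp.le_def, Fin.forall_fin_two]

lemma single_one_le_xy {k p q : ℕ} : Finsupp.single 1 k ≤ xy p q ↔ k ≤ q := by
  simp [Finsupp.le_def, Fin.forall_fin_two]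

lemma xy_sub_single_one_add_single_zero (k p q : ℕ) :
    xy p q - Finsupp.single 1 k + Finsupp.single 0 1 = xy (p + 1) (q - k) := by
  simp [fin_two_ext_iff]

lemma xy_sub_single_zero_add_single_one (k p q : ℕ) :
    xy p q - Finsupp.single 0 k + Finsupp.single 1 1 = xy (p - k) (q + 1) := by
  simp [fin_two_ext_iff]

def yxDerivation (m n : ℕ) (a b : R) :
    Derivation R (MvPolynomial (Fin 2) R) (MvPolynomial (Fin 2) R) :=
  (C a * X 1 ^ m : MvPolynomial (Fin 2) R) • pderiv 0
    + (C b * X 0 ^ n : MvPolynomial (Fin 2) R) • pderiv 1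

lemma yxDerivation_apply (m n : ℕ) (a b : R) (f : MvPolynomial (Fin 2) R) :
    yxDerivation m n a b f = C a * X 1 ^ m * pderiv 0 f + C b * X 0 ^ n * pderiv 1 f :=
  rfl

def firstIntegral (m n : ℕ) (a b : R) : MvPolynomial (Fin 2) R :=
  C (b * (m + 1 : R)) * X 0 ^ (n + 1) - C (a * (n + 1 : R)) * X 1 ^ (m + 1)

variable {m n : ℕ} {a b : R} {f : MvPolynomial (Fin 2) R}

lemma yxDerivation_firstIntegral : yxDerivation m n a b (firstIntegral m n a b) = 0 := by
  simp [yxDerivation_apply, firstIntegral, pderiv_X]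
  ring

/-- The coefficient of `x^p y^q` in `D f`; each `if` drops a term whose exponent would be negative. -/
lemma coeff_xy_of_yxDerivation_eq_zero (hf : yxDerivation m n a b f = 0) (p q : ℕ) :
    a * (p + 1) * (if m ≤ q then coeff (xy (p + 1) (q - m)) f else 0)
      + b * (q + 1) * (if n ≤ p then coeff (xy (p - n) (q + 1)) f else 0) = 0 := by
  have h := congrArg (coeff (xy p q)) hf
  rw [yxDerivation_apply, C_mul_X_pow_eq_monomial, C_mul_X_pow_eq_monomial, coeff_add,
    coeff_monomial_mul', coeff_monomial_mul', coeff_pderiv, coeff_pderiv] at h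
  simp only [single_zero_le_xy, single_one_le_xy, xy_sub_single_one_add_single_zero,
    xy_sub_single_zero_add_single_one, coeff_zero] at h
  refine Eq.trans ?_ h
  congr 1 <;> split_ifs <;> simp [Finsupp.tsub_apply] <;> ring

lemma coeff_xy_eq_zero_of_not_dvd [NoZeroDivisors R] [CharZero R] (ha : a ≠ 0)
    (hf : yxDerivation m n a b f = 0) {i : ℕ} (hi : ¬ n + 1 ∣ i) (j : ℕ) :
    coeff (xy i j) f = 0 := by
  induction i using Nat.strong_induction_on generalizing j with
  | _ i ih =>
    obtain ⟨p, rfl⟩ : ∃ p, i = p + 1 :=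
      Nat.exists_eq_succ_of_ne_zero (by rintro rfl; exact hi (dvd_zero _))
    have hlower : (if n ≤ p then coeff (xy (p - n) (j + m + 1)) f else 0) = 0 := by
      split_ifs with hnp
      · refine ih _ (by omega) (fun hd => hi ?_) _
        rw [show p + 1 = p - n + (n + 1) by omega]
        exact dvd_add hd dvd_rfl
      · rfl
    simpa [hlower, ha, Nat.cast_add_one_ne_zero] using
      coeff_xy_of_yxDerivation_eq_zero hf p (j + m)

lemma eq_zero_of_coeff_xy_zero [NoZeroDivisors R] [CharZero R] (hb : b ≠ 0)
    (hf : yxDerivation m n a b f = 0) (h0 : ∀ i, coeff (xy i 0) f = 0) : f = 0 := by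
  suffices h : ∀ j i, coeff (xy i j) f = 0 by
    ext d
    rw [eq_xy d, h, coeff_zero]
  intro j
  induction j using Nat.strong_induction_on with
  | _ j ih =>
    rcases j with _ | q
    · exact h0
    intro i
    have hupper : (if m ≤ q then coeff (xy (i + n + 1) (q - m)) f else 0) = 0 := by
      split_ifs
      exacts [ih _ (by omega) _, rfl]
    simpa [hupper, hb, Nat.cast_add_one_ne_zero] using
      coeff_xy_of_yxDerivation_eq_zero hf (i + n) q

lemma coeff_xy_lattice_recurrence (hf : yxDerivation m n a b f = 0) (t u : ℕ) :
    (u + 1 : R) * (b * (m + 1)) * coeff (xy (t * (n + 1)) ((u + 1) * (m + 1))) f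
      = (t + 1 : R) * -(a * (n + 1)) * coeff (xy ((t + 1) * (n + 1)) (u * (m + 1))) f := by
  have h := coeff_xy_of_yxDerivation_eq_zero hf (t * (n + 1) + n) (u * (m + 1) + m)
  rw [if_pos (by omega), if_pos (by omega), show u * (m + 1) + m - m = u * (m + 1) by omega,
    show t * (n + 1) + n - n = t * (n + 1) by omega,
    show t * (n + 1) + n + 1 = (t + 1) * (n + 1) by ring,
    show u * (m + 1) + m + 1 = (u + 1) * (m + 1) by ring] at h
  push_cast at h
  linear_combination h

theorem pow_mul_eq_pow_mul_of_forall_mul_eq_mul {M : Type*} [CommMonoid M] {A B : M}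
    {g : ℕ → ℕ → M} (h : ∀ t u, A * g t (u + 1) = B * g (t + 1) u) (t u : ℕ) :
    A ^ u * g t u = B ^ u * g (t + u) 0 := by
  induction u generalizing t with
  | zero => simp
  | succ u ih =>
    rw [pow_succ, mul_assoc, h, mul_left_comm, ih, ← mul_assoc, ← pow_succ',
      Nat.add_right_comm, add_assoc]

lemma isUnit_natCast [Algebra ℚ R] {k : ℕ} (hk : k ≠ 0) : IsUnit (k : R) := by
  simpa using (IsUnit.mk0 (k : ℚ) (Nat.cast_ne_zero.mpr hk)).map (algebraMap ℚ R)

lemma pow_dvd_coeff_xy_zero [Algebra ℚ R] [DecompositionMonoid R] (hab : IsRelPrime a b)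
    (hf : yxDerivation m n a b f = 0) (s : ℕ) :
    (b * (m + 1)) ^ s ∣ coeff (xy (s * (n + 1)) 0) f := by
  have hunit (k : ℕ) : IsUnit ((k : R) + 1) := by exact_mod_cast isUnit_natCast k.succ_ne_zero
  have hrel : IsRelPrime ((b * (m + 1)) ^ s) ((-(a * (n + 1))) ^ s) := by
    refine IsRelPrime.pow ?_
    rw [isRelPrime_mul_unit_right_left (hunit m), neg_mul_eq_mul_neg,
      isRelPrime_mul_unit_right_right (hunit n).neg]
    exact hab.symm
  -- weighting by `t! u!` makes the recurrence of `coeff_xy_lattice_recurrence` shift-invariant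
  have key := pow_mul_eq_pow_mul_of_forall_mul_eq_mul (A := b * (m + 1)) (B := -(a * (n + 1)))
    (g := fun t u => (t.factorial * u.factorial : R) * coeff (xy (t * (n + 1)) (u * (m + 1))) f)
    (fun t u => ?_) 0 s
  · simp only [Nat.factorial_zero, Nat.cast_one, one_mul, mul_one, zero_mul, zero_add] at key
    have hdvd : (b * (m + 1)) ^ s ∣
        (-(a * (n + 1))) ^ s * ((s.factorial : R) * coeff (xy (s * (n + 1)) 0) f) :=
      ⟨_, key.symm⟩
    exact (isUnit_natCast s.factorial_ne_zero).dvd_mul_left.mp (hrel.dvd_of_dvd_mul_left hdvd)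
  · simp only [Nat.factorial_succ]
    push_cast
    linear_combination (t.factorial * u.factorial : R) * coeff_xy_lattice_recurrence hf t u

lemma coeff_xy_zero_firstIntegral_pow (i s : ℕ) :
    coeff (xy i 0) (firstIntegral m n a b ^ s)
      = if s * (n + 1) = i then (b * (m + 1)) ^ s else 0 := by
  set P : MvPolynomial (Fin 2) R := C (b * (m + 1 : R)) * X 0 ^ (n + 1)
  obtain ⟨r, hr⟩ : X 1 ∣ P ^ s - firstIntegral m n a b ^ s :=
    dvd_trans ⟨C (a * (n + 1)) * X 1 ^ m, by simp [P, firstIntegral]; ring⟩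
      (sub_dvd_pow_sub_pow _ _ s)
  have hP : P ^ s = monomial (Finsupp.single 0 (s * (n + 1))) ((b * (m + 1)) ^ s) := by
    rw [mul_pow, ← map_pow, ← pow_mul, C_mul_X_pow_eq_monomial, mul_comm]
  rw [show firstIntegral m n a b ^ s = P ^ s - X 1 * r by rw [← hr]; ring, coeff_sub,
    coeff_X_mul', hP, coeff_monomial]
  simp [fin_two_ext_iff]

lemma yxDerivation_eq_zero_of_mem_adjoin {g : MvPolynomial (Fin 2) R}
    (hg : g ∈ Algebra.adjoin R {firstIntegral m n a b}) : yxDerivation m n a b g = 0 :=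
  Derivation.eqOn_adjoin (D2 := 0) (by simpa using yxDerivation_firstIntegral) hg

lemma coeff_xy_zero_eq_zero_of_totalDegree_lt {i : ℕ} (hi : f.totalDegree < i) :
    coeff (xy i 0) f = 0 := by
  apply coeff_eq_zero_of_totalDegree_lt
  rwa [xy_zero_right, Finsupp.support_single 0 (by omega), Finset.sum_singleton,
    Finsupp.single_eq_same]

theorem mem_adjoin_firstIntegral_of_yxDerivation_eq_zero [IsDomain R] [Algebra ℚ R]
    [DecompositionMonoid R] (ha : a ≠ 0) (hb : b ≠ 0) (hab : IsRelPrime a b)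
    (hf : yxDerivation m n a b f = 0) : f ∈ Algebra.adjoin R {firstIntegral m n a b} := by
  have : CharZero R := algebraRat.charZero R
  choose c hc using pow_dvd_coeff_xy_zero hab hf
  set g := ∑ s ∈ Finset.range (f.totalDegree + 1), C (c s) * firstIntegral m n a b ^ s
  have hg : g ∈ Algebra.adjoin R {firstIntegral m n a b} := Subalgebra.sum_mem _ fun s _ => by
    rw [← smul_eq_C_mul]
    exact Subalgebra.smul_mem _ (Subalgebra.pow_mem _ (Algebra.self_mem_adjoin_singleton R _) s) _
  suffices f - g = 0 by rwa [sub_eq_zero.mp this]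
  refine eq_zero_of_coeff_xy_zero hb
    (by rw [map_sub, hf, yxDerivation_eq_zero_of_mem_adjoin hg, sub_zero]) fun i => ?_
  rw [coeff_sub, sub_eq_zero, coeff_sum]
  simp only [coeff_C_mul, coeff_xy_zero_firstIntegral_pow, mul_ite, mul_zero]
  by_cases hi : n + 1 ∣ i
  · obtain ⟨t, rfl⟩ := hi
    simp only [mul_comm (n + 1) t, Nat.mul_left_inj (Nat.succ_ne_zero n), Finset.sum_ite_eq',
      Finset.mem_range]
    split_ifs with htN
    · rw [hc, mul_comm]
    · exact coeff_xy_zero_eq_zero_of_totalDegree_lt (by nlinarith)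
  · rw [coeff_xy_eq_zero_of_not_dvd ha hf hi, Finset.sum_eq_zero]
    rintro s -
    rw [if_neg]
    rintro rfl
    exact hi (dvd_mul_left _ _)

end YmXnDerivation

end

/-- **Lemma 3.4 (b).** Let `R` be a UFD containing `ℚ`, `m, n ≥ 0`, and `a, b ∈ R \ {0}`
with `gcd (a, b) = 1`.  For the derivation `D = a y^m ∂x + b x^n ∂y` on `R[x,y]` one has
`R[x,y]^D = R[b(m+1) x^(n+1) - a(n+1) y^(m+1)]`. -/
theorem kernel_of_ay_m_dx_add_bx_n_dy
    (R : Type*) [CommRing R] [IsDomain R] [UniqueFactorizationMonoid R] [Algebra ℚ R]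
    (m n : ℕ) (a b : R) (ha : a ≠ 0) (hb : b ≠ 0) (hab : IsRelPrime a b)
    (D : Derivation R (MvPolynomial (Fin 2) R) (MvPolynomial (Fin 2) R))
    (hD : D = (C a * X 1 ^ m : MvPolynomial (Fin 2) R) • pderiv 0
              + (C b * X 0 ^ n : MvPolynomial (Fin 2) R) • pderiv 1) :
    ∀ f : MvPolynomial (Fin 2) R,
      D f = 0 ↔ f ∈ Algebra.adjoin R
        {(C (b * (m + 1 : R)) * X 0 ^ (n + 1) - C (a * (n + 1 : R)) * X 1 ^ (m + 1) :
          MvPolynomial (Fin 2) R)} := by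
  subst hD
  exact fun f => ⟨YmXnDerivation.mem_adjoin_firstIntegral_of_yxDerivation_eq_zero ha hb hab,
    YmXnDerivation.yxDerivation_eq_zero_of_mem_adjoin⟩
end

section
/- Let R be a UFD containing ℚ and let m, n be relatively prime positive integers. Let D be the R-derivation on R[x,y] given by D = n·x ∂/∂x − m·y ∂/∂y. Then the kernel R[x,y]^D equals R[x^m y^n]. -/
/-!
Each `X i * ∂ᵢ` multiplies the monomial `xᵈ` by `d i`, so `D` acts diagonally on monomials,
scaling `xᵈ` by the integer `n d₀ - m d₁`. Since `R` is torsion-free, `D f = 0` exactly when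
every monomial of `f` has `n d₀ = m d₁`, and by coprimality these exponents are the multiples
of `(m, n)`, i.e. the exponents of the powers of `xᵐ yⁿ`.
-/

open MvPolynomial

theorem Nat.Coprime.mul_eq_mul_iff {m n a b : ℕ} (h : m.Coprime n) :
    n * a = m * b ↔ ∃ k, a = m * k ∧ b = n * k := by
  refine ⟨fun hab => ?_, fun ⟨k, ha, hb⟩ => by rw [ha, hb, Nat.mul_left_comm]⟩
  obtain ⟨k, rfl⟩ := h.dvd_of_dvd_mul_left (Dvd.intro b hab.symm)
  rcases Nat.eq_zero_or_pos m with rfl | hm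
  · exact ⟨b, by simp, by simp [(Nat.coprime_zero_left _).mp h]⟩
  · exact ⟨k, rfl, Nat.eq_of_mul_eq_mul_left hm (by rw [← hab, Nat.mul_left_comm])⟩

theorem Nat.Coprime.setOf_mul_eq_mul_eq_range {m n : ℕ} (h : m.Coprime n) :
    {d : Fin 2 →₀ ℕ | n * d 0 = m * d 1} =
      Set.range (fun k : ℕ => k • (Finsupp.single 0 m + Finsupp.single 1 n)) := by
  ext d
  simp only [Set.mem_ofPred_eq, h.mul_eq_mul_iff, Set.mem_range, Finsupp.ext_iff,
    Fin.forall_fin_two]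
  simp [mul_comm, eq_comm]

namespace MvPolynomial

section CommSemiring

variable {R σ : Type*} [CommSemiring R]

theorem X_pow_mul_X_pow_eq_monomial (i j : σ) (a b : ℕ) :
    (X i ^ a * X j ^ b : MvPolynomial σ R) =
      monomial (Finsupp.single i a + Finsupp.single j b) 1 := by
  rw [X_pow_eq_monomial, X_pow_eq_monomial, monomial_mul, one_mul]

theorem adjoin_monomial_eq_restrictSupport (s : σ →₀ ℕ) :
    Subalgebra.toSubmodule (Algebra.adjoin R {monomial s (1 : R)}) =
      restrictSupport R (Set.range (fun k : ℕ => k • s)) := by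
  rw [Algebra.adjoin_eq_span, ← Submonoid.powers_eq_closure, Submonoid.coe_powers,
    restrictSupport_eq_span, ← Set.range_comp]
  simp only [Function.comp_def, monomial_pow, one_pow]

theorem mem_adjoin_monomial_iff {s : σ →₀ ℕ} {p : MvPolynomial σ R} :
    p ∈ Algebra.adjoin R {monomial s (1 : R)} ↔
      ↑p.support ⊆ Set.range (fun k : ℕ => k • s) := by
  rw [← Subalgebra.mem_toSubmodule, adjoin_monomial_eq_restrictSupport, mem_restrictSupport_iff]

theorem coeff_X_mul_pderiv (i : σ) (p : MvPolynomial σ R) (d : σ →₀ ℕ) :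
    coeff d (X i * pderiv i p) = d i • coeff d p := by
  induction p using MvPolynomial.induction_on' with
  | monomial e r =>
    classical
    rw [X_mul_pderiv_monomial, coeff_smul, coeff_monomial]
    split_ifs with h <;> simp [h]
  | add p q hp hq => simp only [map_add, mul_add, coeff_add, hp, hq, smul_add]

theorem coeff_C_mul_X_smul_pderiv_apply (a : R) (i : σ) (p : MvPolynomial σ R)
    (d : σ →₀ ℕ) :
    coeff d (((C a * X i : MvPolynomial σ R) • pderiv i) p) = a * d i * coeff d p := by
  rw [Derivation.smul_apply, smul_eq_mul, mul_assoc, coeff_C_mul, coeff_X_mul_pderiv,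
    nsmul_eq_mul, mul_assoc]

end CommSemiring

theorem smul_pderiv_sub_smul_pderiv_apply_eq_zero_iff {R σ : Type*} [CommRing R]
    [IsAddTorsionFree R] (m n : ℕ) (i j : σ) (p : MvPolynomial σ R) :
    ((C (n : R) * X i : MvPolynomial σ R) • pderiv i -
        (C (m : R) * X j : MvPolynomial σ R) • pderiv j :
      Derivation R (MvPolynomial σ R) (MvPolynomial σ R)) p = 0 ↔
      ∀ d ∈ p.support, n * d i = m * d j := by
  have hcoeff (d : σ →₀ ℕ) :
      coeff d (((C (n : R) * X i : MvPolynomial σ R) • pderiv i -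
        (C (m : R) * X j : MvPolynomial σ R) • pderiv j :
          Derivation R (MvPolynomial σ R) (MvPolynomial σ R)) p) =
        ((n * d i : ℕ) - (m * d j : ℕ) : ℤ) • coeff d p := by
    rw [Derivation.sub_apply, coeff_sub, coeff_C_mul_X_smul_pderiv_apply,
      coeff_C_mul_X_smul_pderiv_apply, zsmul_eq_mul]
    push_cast
    ring
  simp only [MvPolynomial.ext_iff, hcoeff, coeff_zero, smul_eq_zero, sub_eq_zero, Nat.cast_inj,
    mem_support_iff, ne_eq, or_iff_not_imp_right]

end MvPolynomial

theorem kernel_of_nx_dx_sub_my_dy_general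
    (R : Type*) [CommRing R] [Algebra ℚ R]
    (m n : ℕ) (hmn : Nat.Coprime m n)
    (D : Derivation R (MvPolynomial (Fin 2) R) (MvPolynomial (Fin 2) R))
    (hD : D = (C (n : R) * X 0 : MvPolynomial (Fin 2) R) • pderiv 0
              - (C (m : R) * X 1 : MvPolynomial (Fin 2) R) • pderiv 1) :
    ∀ f : MvPolynomial (Fin 2) R,
      D f = 0 ↔ f ∈ Algebra.adjoin R {(X 0 ^ m * X 1 ^ n : MvPolynomial (Fin 2) R)} := by
  have := IsAddTorsionFree.of_module_rat R
  intro f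
  rw [hD, smul_pderiv_sub_smul_pderiv_apply_eq_zero_iff, X_pow_mul_X_pow_eq_monomial,
    mem_adjoin_monomial_iff, ← hmn.setOf_mul_eq_mul_eq_range]
  rfl

/-- **Lemma 3.4 (c).** Let `R` be a UFD containing `ℚ` and `m, n` relatively prime positive
integers.  For the derivation `D = n x ∂x - m y ∂y` on `R[x,y]` one has
`R[x,y]^D = R[x^m y^n]`. -/
theorem kernel_of_nx_dx_sub_my_dy
    (R : Type*) [CommRing R] [IsDomain R] [UniqueFactorizationMonoid R] [Algebra ℚ R]
    (m n : ℕ) (hm : 0 < m) (hn : 0 < n) (hmn : Nat.Coprime m n)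
    (D : Derivation R (MvPolynomial (Fin 2) R) (MvPolynomial (Fin 2) R))
    (hD : D = (C (n : R) * X 0 : MvPolynomial (Fin 2) R) • pderiv 0
              - (C (m : R) * X 1 : MvPolynomial (Fin 2) R) • pderiv 1) :
    ∀ f : MvPolynomial (Fin 2) R,
      D f = 0 ↔ f ∈ Algebra.adjoin R {(X 0 ^ m * X 1 ^ n : MvPolynomial (Fin 2) R)} :=
  kernel_of_nx_dx_sub_my_dy_general R m n hmn D hD
end

section
/- Let R be an integral domain of characteristic zero and let g ∈ R[x,y] \ {0} with deg_y g ≥ 1. Let D be the R-derivation on R[x,y] given by D = ∂/∂x + g·∂/∂y. Then the kernel R[x,y]^D equals R. -/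
/-!
Write `R[x,y] = A[y]` with `A = R[x]` and `F = ∑ aᵢ yⁱ`, so that `D F = ∑ aᵢ' yⁱ + G ∂F/∂y`
with `G` of `y`-degree `k ≥ 1`. If `n = deg_y F ≥ 1`, the term `G ∂F/∂y` has the nonzero leading
coefficient `n b aₙ` (with `b` the leading coefficient of `G`) in degree `k + n - 1 ≥ n`, which can
only be cancelled by `a'ₙ` in degree `n`; hence `a'ₙ = -n b aₙ`, impossible in `R[x]` because
differentiation lowers the degree. So `F = a₀ ∈ A` with `a₀' = 0`, i.e. `F ∈ R`.
-/

open MvPolynomial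

open scoped Polynomial

namespace Polynomial

theorem derivative_ne_mul_self {R : Type*} [CommRing R] [NoZeroDivisors R] {p c : R[X]}
    (hp : p ≠ 0) (hc : c ≠ 0) : derivative p ≠ c * p := by
  by_cases hp0 : p.natDegree = 0
  · have hd : derivative p = 0 := by rw [eq_C_of_natDegree_eq_zero hp0, derivative_C]
    rw [hd]
    exact (mul_ne_zero hc hp).symm
  · refine fun h => (natDegree_derivative_lt hp0).not_ge ?_
    rw [h, natDegree_mul hc hp]
    exact Nat.le_add_left _ _

variable {S A : Type*} [CommRing S] [CommRing A] [Algebra S A]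

@[simp]
theorem coeff_equivPolynomialSelf_mapCoeffs (d : Derivation S A A) (p : A[X]) (i : ℕ) :
    (PolynomialModule.equivPolynomialSelf (d.mapCoeffs p)).coeff i = d (p.coeff i) := rfl

variable [IsDomain A] [CharZero A] {d : Derivation S A A}

theorem natDegree_eq_zero_of_mapCoeffs_add_mul_derivative_eq_zero
    (hd : ∀ a c : A, a ≠ 0 → c ≠ 0 → d a ≠ c * a) {F G : A[X]} (hG : 1 ≤ G.natDegree)
    (h : PolynomialModule.equivPolynomialSelf (d.mapCoeffs F) + G * derivative F = 0) :
    F.natDegree = 0 := by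
  by_contra hn
  have hF : F ≠ 0 := by rintro rfl; exact hn natDegree_zero
  have hG0 : G ≠ 0 := by rintro rfl; simp at hG
  set m := G.natDegree + (F.natDegree - 1)
  have hlead : (G * derivative F).coeff m = G.leadingCoeff * (F.leadingCoeff * F.natDegree) := by
    have := coeff_mul_degree_add_degree G (derivative F)
    rwa [natDegree_derivative, leadingCoeff_derivative] at this
  have hlead0 : G.leadingCoeff * (F.leadingCoeff * F.natDegree) ≠ 0 := by
    simp [hF, hG0, hn]
  have hcoeff : d (F.coeff m) = -(G.leadingCoeff * F.natDegree) * F.leadingCoeff := by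
    have := congrArg (coeff · m) h
    simp only [coeff_add, coeff_zero, coeff_equivPolynomialSelf_mapCoeffs, hlead] at this
    linear_combination this
  have hm : m = F.natDegree := by
    refine le_antisymm (le_natDegree_of_ne_zero fun h0 => hlead0 ?_) (by omega)
    rw [h0, d.map_zero] at hcoeff
    linear_combination hcoeff
  rw [hm] at hcoeff
  exact hd _ _ (leadingCoeff_ne_zero.mpr hF) (by simp [hG0, hn]) hcoeff

theorem eq_C_of_mapCoeffs_add_mul_derivative_eq_zero
    (hd : ∀ a c : A, a ≠ 0 → c ≠ 0 → d a ≠ c * a) {F G : A[X]} (hG : 1 ≤ G.natDegree)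
    (h : PolynomialModule.equivPolynomialSelf (d.mapCoeffs F) + G * derivative F = 0) :
    ∃ a, F = C a ∧ d a = 0 := by
  have hF := eq_C_of_natDegree_eq_zero (natDegree_eq_zero_of_mapCoeffs_add_mul_derivative_eq_zero
    hd hG h)
  refine ⟨F.coeff 0, hF, ?_⟩
  rw [hF, derivative_C, mul_zero, add_zero] at h
  simpa using congrArg (coeff · 0) h

end Polynomial

namespace Polynomial.Bivariate

variable {R : Type*} [CommRing R]

theorem degreeOf_one_equivMvPolynomial_C (a : R[X]) :
    degreeOf 1 (equivMvPolynomial R (C a)) = 0 := by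
  induction a using Polynomial.induction_on' with
  | add p q hp hq =>
    simpa [hp, hq] using degreeOf_add_le 1 (equivMvPolynomial R (C p)) (equivMvPolynomial R (C q))
  | monomial n c =>
    rw [← C_mul_X_pow_eq_monomial]
    simpa [equivMvPolynomial] using Nat.le_zero.mp
      ((degreeOf_C_mul_le _ _ _).trans (degreeOf_X_pow_of_ne (R := R) n one_ne_zero).le)

theorem degreeOf_one_equivMvPolynomial_le (p : R[X][Y]) :
    degreeOf 1 (equivMvPolynomial R p) ≤ p.natDegree := by
  conv_lhs => rw [p.as_sum_range_C_mul_X_pow, map_sum]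
  refine (degreeOf_sum_le _ _ _).trans (Finset.sup_le fun i hi => ?_)
  rw [map_mul, map_pow, equivMvPolynomial_X]
  have hXi : degreeOf 1 (MvPolynomial.X 1 ^ i : MvPolynomial (Fin 2) R) ≤ i :=
    degreeOf_le_iff.mpr fun m hm => by
      rw [MvPolynomial.X_pow_eq_monomial] at hm
      obtain rfl := Finset.mem_singleton.mp (MvPolynomial.support_monomial_subset hm)
      simp
  calc _ ≤ 0 + i := (degreeOf_mul_le _ _ _).trans
        (add_le_add (degreeOf_one_equivMvPolynomial_C _).le hXi)
    _ ≤ p.natDegree := by simpa [Nat.lt_succ_iff] using hi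

theorem pderiv_zero_add_smul_pderiv_one_equivMvPolynomial (p q : R[X][Y]) :
    (pderiv 0 + equivMvPolynomial R q • pderiv 1 :
      Derivation R (MvPolynomial (Fin 2) R) (MvPolynomial (Fin 2) R)) (equivMvPolynomial R p) =
    equivMvPolynomial R (PolynomialModule.equivPolynomialSelf (derivative'.mapCoeffs p) +
      q * derivative p) := by
  rw [Derivation.add_apply, Derivation.smul_apply, pderiv_zero_equivMvPolynomial,
    pderiv_one_equivMvPolynomial, smul_eq_mul, map_add, map_mul]

end Polynomial.Bivariate

open Polynomial.Bivariate

theorem kernel_of_dx_add_g_dy_eq_base_general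
    (R : Type*) [CommRing R] [IsDomain R] [CharZero R]
    (g : MvPolynomial (Fin 2) R) (hdeg : 1 ≤ g.degreeOf 1)
    (D : Derivation R (MvPolynomial (Fin 2) R) (MvPolynomial (Fin 2) R))
    (hD : D = pderiv 0 + g • pderiv 1) :
    ∀ f : MvPolynomial (Fin 2) R, D f = 0 ↔ ∃ r : R, f = C r := by
  intro f
  subst hD
  refine ⟨fun hf => ?_, by rintro ⟨r, rfl⟩; exact Derivation.map_algebraMap _ r⟩
  obtain ⟨F, rfl⟩ := (equivMvPolynomial R).surjective f
  obtain ⟨G, rfl⟩ := (equivMvPolynomial R).surjective g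
  rw [pderiv_zero_add_smul_pderiv_one_equivMvPolynomial,
    map_eq_zero_iff _ (equivMvPolynomial R).injective] at hf
  obtain ⟨a, rfl, ha⟩ := Polynomial.eq_C_of_mapCoeffs_add_mul_derivative_eq_zero
    (fun _ _ => Polynomial.derivative_ne_mul_self)
    (hdeg.trans (degreeOf_one_equivMvPolynomial_le G)) hf
  obtain ⟨r, rfl⟩ : ∃ r, a = Polynomial.C r := ⟨_, Polynomial.eq_C_of_derivative_eq_zero ha⟩
  exact ⟨r, equivMvPolynomial_C_C⟩

/-- **Lemma 3.5.** Let `R` be an integral domain of characteristic zero and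
`g ∈ R[x,y] \ {0}` with `deg_y g ≥ 1`.  For the derivation `D = ∂x + g ∂y` on `R[x,y]` one
has `R[x,y]^D = R`. -/
theorem kernel_of_dx_add_g_dy_eq_base
    (R : Type*) [CommRing R] [IsDomain R] [CharZero R]
    (g : MvPolynomial (Fin 2) R) (hg : g ≠ 0) (hdeg : 1 ≤ g.degreeOf 1)
    (D : Derivation R (MvPolynomial (Fin 2) R) (MvPolynomial (Fin 2) R))
    (hD : D = pderiv 0 + g • pderiv 1) :
    ∀ f : MvPolynomial (Fin 2) R, D f = 0 ↔ ∃ r : R, f = C r :=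
  kernel_of_dx_add_g_dy_eq_base_general R g hdeg D hD
end

section
/- Let k be a field of characteristic zero, let m, n ∈ ℤ_{≥0}, let a ∈ k*, and let D be the k-derivation on k[x,y] given by D = ∂/∂x + a·x^m·y^{n+1} ∂/∂y, extended to k(x,y). Then k(x,y)^D = k if and only if n = 0. -/
/-!
A nonzero element `f / g` (in lowest terms) of the kernel of `D` in `k(x, y)` forces `f ∣ D f`
and `g ∣ D g` with the same cofactor. For `n = 0` the derivation `∂x + a xᵐ y ∂y` acts on the
coefficient of `yⁱ` by `c ↦ c' + i a xᵐ c`, and a degree count in `x` shows that the only such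
Darboux polynomials are `γ yᵈ`, with cofactor `d a xᵐ` determined by `d`; hence `f` and `g` are
constant multiples of the same power of `y`. For `n ≥ 1` the rational function
`y⁻ⁿ + n a xᵐ⁺¹ / (m + 1)` is a nonconstant first integral.
-/

theorem inv_algebraMap_ne_algebraMap {R K : Type*} [CommRing R] [Field K] [Algebra R K]
    [IsFractionRing R K] {x : R} (hx0 : x ≠ 0) (hx : ¬IsUnit x) (r : R) :
    (algebraMap R K x)⁻¹ ≠ algebraMap R K r := by
  intro h
  refine hx (IsUnit.of_mul_eq_one (b := r) (IsFractionRing.injective R K ?_))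
  rw [map_mul, map_one, ← h, mul_inv_cancel₀]
  exact (map_ne_zero_iff _ (IsFractionRing.injective R K)).2 hx0

theorem MvPolynomial.not_isUnit_X_pow {σ R : Type*} [CommSemiring R] [Nontrivial R] (i : σ)
    {n : ℕ} (hn : n ≠ 0) : ¬IsUnit (X i ^ n : MvPolynomial σ R) := fun h => by
  simpa [zero_pow hn] using h.map constantCoeff

theorem exists_num_den_of_derivation_eq_zero {S R K : Type*} [CommRing S] [CommRing R]
    [IsDomain R] [UniqueFactorizationMonoid R] [Field K] [Algebra R K] [IsFractionRing R K]
    [Algebra S R] [Algebra S K] {D : Derivation S R R} {D' : Derivation S K K}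
    (hD' : ∀ p, D' (algebraMap R K p) = algebraMap R K (D p)) {u : K} (hu0 : u ≠ 0)
    (hu : D' u = 0) :
    ∃ f g h : R, f ≠ 0 ∧ g ≠ 0 ∧ algebraMap R K f / algebraMap R K g = u ∧
      D f = h * f ∧ D g = h * g := by
  set f := IsFractionRing.num R u
  set g : R := (IsFractionRing.den R u : R)
  have hf : f ≠ 0 := fun h => hu0 (IsFractionRing.eq_zero_of_num_eq_zero h)
  have hg : g ≠ 0 := nonZeroDivisors.coe_ne_zero _
  have hfg : algebraMap R K f / algebraMap R K g = u := IsFractionRing.mk'_num_den' R u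
  have hfu : algebraMap R K f = u * algebraMap R K g := by
    rw [← hfg, div_mul_cancel₀]
    exact (map_ne_zero_iff _ (IsFractionRing.injective R K)).2 hg
  -- `D' (f / g) = 0` clears to `g D f = f D g`; coprimality of `f` and `g` then gives `f ∣ D f`
  have hcross : g * D f = f * D g := by
    apply IsFractionRing.injective R K
    have := congrArg D' hfu
    rw [D'.leibniz, hu, smul_zero, add_zero, smul_eq_mul, hD', hD'] at this
    rw [map_mul, map_mul, this, hfu]
    ring
  obtain ⟨h, hh⟩ : f ∣ D f :=
    (IsFractionRing.num_den_reduced R u).dvd_of_dvd_mul_left (hcross ▸ dvd_mul_right f _)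
  refine ⟨f, g, h, hf, hg, hfg, by rw [hh, mul_comm], mul_left_cancel₀ hf ?_⟩
  rw [← hcross, hh]
  ring

theorem derivation_inv_pow_add_eq_zero {k K : Type*} [Field k] [CharZero k] [Field K]
    [Algebra k K] (D : Derivation k K K) {Y Z : K} {a : k} {m n : ℕ} (hY : Y ≠ 0)
    (hDZ : D Z = 1) (hDY : D Y = algebraMap k K a * Z ^ m * Y ^ (n + 1)) :
    D ((Y ^ n)⁻¹ + algebraMap k K (n * a / (m + 1)) * Z ^ (m + 1)) = 0 := by
  have hc : (m + 1 : K) * algebraMap k K (n * a / (m + 1)) = n * algebraMap k K a := by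
    have hk : (m + 1 : k) * (n * a / (m + 1)) = n * a :=
      mul_div_cancel₀ _ (Nat.cast_add_one_ne_zero m)
    simpa using congrArg (algebraMap k K) hk
  rw [map_add, Derivation.leibniz_inv, Derivation.leibniz_pow, hDY, Derivation.leibniz,
    Derivation.map_algebraMap, Derivation.leibniz_pow, hDZ]
  simp only [smul_eq_mul, nsmul_eq_mul, mul_one, add_tsub_cancel_right]
  cases n with
  | zero => simp
  | succ n =>
    field_simp
    push_cast at hc ⊢
    linear_combination Z ^ m * Y ^ (2 * n + 2) * hc

namespace Polynomial

variable {R : Type*} [CommRing R] [IsDomain R]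

theorem eq_zero_of_derivative_eq_mul {c w : R[X]} (hc : c ≠ 0) (h : derivative c = w * c) :
    w = 0 := by
  have hc' : derivative c = 0 := dvd_derivative_iff.1 (h ▸ dvd_mul_left c w)
  exact (mul_eq_zero.1 (h ▸ hc')).resolve_right hc

theorem natDegree_eq_zero_of_natDegree_mul_le {H F : R[X]} (hF : F ≠ 0)
    (h : (H * F).natDegree ≤ F.natDegree) : H.natDegree = 0 := by
  rcases eq_or_ne H 0 with rfl | hH
  · rfl
  · rw [natDegree_mul hH hF] at h
    omega

open Bivariate

variable [CharZero R]

theorem eq_C_mul_X_pow_of_coeff_derivative_add_eq {b : R[X]} (hb : b ≠ 0) {F H : R[X][Y]}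
    (hF : F ≠ 0) (hFH : ∀ i : ℕ, derivative (F.coeff i) + i * b * F.coeff i = (H * F).coeff i) :
    ∃ γ : R, F = C (C γ) * X ^ F.natDegree ∧ H = C (F.natDegree * b) := by
  have hH : H.natDegree = 0 := by
    refine natDegree_eq_zero_of_natDegree_mul_le hF <|
      natDegree_le_iff_coeff_eq_zero.2 fun i hi => ?_
    rw [← hFH, coeff_eq_zero_of_natDegree_lt (by exact_mod_cast hi)]
    simp
  obtain ⟨h₀, rfl⟩ : ∃ h₀, H = C h₀ := ⟨_, eq_C_of_natDegree_eq_zero hH⟩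
  simp only [coeff_C_mul] at hFH
  -- the coefficient `c` of `yⁱ` satisfies `c' = (h₀ - i b) c`, and `c ∣ c'` forces `c' = 0`
  have hcoeff : ∀ i, F.coeff i ≠ 0 → h₀ = i * b ∧ derivative (F.coeff i) = 0 := by
    intro i hi
    have h := eq_zero_of_derivative_eq_mul (w := h₀ - (i : R[X]) * b) hi
      (by linear_combination hFH i)
    have hHi := sub_eq_zero.1 h
    exact ⟨hHi, by linear_combination hFH i + F.coeff i * hHi⟩
  obtain ⟨hHd, hlead⟩ := hcoeff _ (leadingCoeff_ne_zero.2 hF)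
  refine ⟨(F.coeff F.natDegree).coeff 0, ?_, by rw [hHd]⟩
  ext1 i
  rw [coeff_C_mul_X_pow]
  split_ifs with hi
  · rw [hi, ← eq_C_of_derivative_eq_zero hlead]
  · by_contra hne
    have hdi : (F.natDegree : R[X]) * b = i * b := hHd.symm.trans (hcoeff i hne).1
    exact hi (Nat.cast_inj.1 (mul_right_cancel₀ hb hdi)).symm

end Polynomial

namespace Polynomial.Bivariate

variable {R : Type*} [CommRing R]

theorem coeff_equivMvPolynomial_symm_apply {b : R[X]}
    {D : Derivation R (MvPolynomial (Fin 2) R) (MvPolynomial (Fin 2) R)}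
    (hD : D = MvPolynomial.pderiv 0 +
      (equivMvPolynomial R (C b) * MvPolynomial.X 1) • MvPolynomial.pderiv 1)
    (F : R[X][Y]) (i : ℕ) :
    ((equivMvPolynomial R).symm (D (equivMvPolynomial R F))).coeff i
      = derivative (F.coeff i) + i * b * F.coeff i := by
  rw [hD, Derivation.add_apply, Derivation.smul_apply, smul_eq_mul,
    pderiv_zero_equivMvPolynomial, pderiv_one_equivMvPolynomial, ← equivMvPolynomial_X, ← map_mul,
    ← map_mul, ← map_add, AlgEquiv.symm_apply_apply, coeff_add, mul_assoc, coeff_C_mul]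
  congr 1
  cases i with
  | zero => simp
  | succ j =>
    rw [coeff_X_mul, coeff_derivative]
    push_cast
    ring

variable [IsDomain R] [CharZero R]

theorem exists_eq_C_mul_X_pow_of_derivation_apply_eq_mul {b : R[X]} (hb : b ≠ 0)
    {D : Derivation R (MvPolynomial (Fin 2) R) (MvPolynomial (Fin 2) R)}
    (hD : D = MvPolynomial.pderiv 0 +
      (equivMvPolynomial R (C b) * MvPolynomial.X 1) • MvPolynomial.pderiv 1)
    {p h : MvPolynomial (Fin 2) R} (hp : p ≠ 0) (hph : D p = h * p) :
    ∃ (γ : R) (d : ℕ), p = MvPolynomial.C γ * MvPolynomial.X 1 ^ d ∧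
      h = equivMvPolynomial R (C (d * b)) := by
  obtain ⟨F, rfl⟩ := (equivMvPolynomial R).surjective p
  obtain ⟨H, rfl⟩ := (equivMvPolynomial R).surjective h
  obtain ⟨γ, hγ, rfl⟩ := eq_C_mul_X_pow_of_coeff_derivative_add_eq hb (by simpa using hp)
    fun i => by rw [← coeff_equivMvPolynomial_symm_apply hD, hph, ← map_mul,
      AlgEquiv.symm_apply_apply]
  refine ⟨γ, F.natDegree, ?_, rfl⟩
  nth_rw 1 [hγ]
  simp

end Polynomial.Bivariate

section FractionField

open MvPolynomial
open Polynomial.Bivariate (equivMvPolynomial exists_eq_C_mul_X_pow_of_derivation_apply_eq_mul)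

variable {k K : Type*} [Field k] [Field K] [Algebra (MvPolynomial (Fin 2) k) K] [Algebra k K]
  [IsScalarTower k (MvPolynomial (Fin 2) k) K]

theorem algebraMap_mvPolynomial_C (r : k) :
    algebraMap (MvPolynomial (Fin 2) k) K (C r) = algebraMap k K r := by
  rw [IsScalarTower.algebraMap_apply k (MvPolynomial (Fin 2) k) K, MvPolynomial.algebraMap_eq]

variable [IsFractionRing (MvPolynomial (Fin 2) k) K] [CharZero k]

theorem exists_derivation_eq_zero_ne_algebraMap {m n : ℕ} (hn : n ≠ 0) (a : k)
    {D : Derivation k (MvPolynomial (Fin 2) k) (MvPolynomial (Fin 2) k)}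
    (hD : D = pderiv 0 + (C a * X 0 ^ m * X 1 ^ (n + 1) : MvPolynomial (Fin 2) k) • pderiv 1)
    {D' : Derivation k K K}
    (hD' : ∀ p, D' (algebraMap (MvPolynomial (Fin 2) k) K p)
      = algebraMap (MvPolynomial (Fin 2) k) K (D p)) :
    ∃ u : K, D' u = 0 ∧ ∀ c : k, u ≠ algebraMap k K c := by
  set φ := algebraMap (MvPolynomial (Fin 2) k) K
  have hY : φ (X 1) ≠ 0 := (map_ne_zero_iff _ (IsFractionRing.injective _ K)).2 (X_ne_zero _)
  refine ⟨_, derivation_inv_pow_add_eq_zero D' (Z := φ (X 0)) (a := a) (m := m) (n := n) hY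
    ?_ ?_, fun c hc => ?_⟩
  · simp [φ, hD', hD]
  · simp [φ, hD', hD, algebraMap_mvPolynomial_C]
  · -- `y⁻ⁿ = c - (n a / (m + 1)) xᵐ⁺¹` would be a polynomial, but `yⁿ` is not a unit
    refine inv_algebraMap_ne_algebraMap (K := K) (x := (X 1 ^ n : MvPolynomial (Fin 2) k))
      (pow_ne_zero n (X_ne_zero 1)) (not_isUnit_X_pow 1 hn)
      (C c - C (n * a / (m + 1)) * X 0 ^ (m + 1)) ?_
    rw [map_pow, eq_sub_of_add_eq hc]
    simp [φ, algebraMap_mvPolynomial_C]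

theorem exists_eq_algebraMap_of_derivation_eq_zero {b : Polynomial k} (hb : b ≠ 0)
    {D : Derivation k (MvPolynomial (Fin 2) k) (MvPolynomial (Fin 2) k)}
    (hD : D = pderiv 0 +
      (equivMvPolynomial k (Polynomial.C b) * X 1) • pderiv 1)
    {D' : Derivation k K K} (hD' : ∀ p, D' (algebraMap (MvPolynomial (Fin 2) k) K p)
      = algebraMap (MvPolynomial (Fin 2) k) K (D p))
    {u : K} (hu : D' u = 0) : ∃ c : k, u = algebraMap k K c := by
  rcases eq_or_ne u 0 with rfl | hu0
  · exact ⟨0, (map_zero _).symm⟩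
  obtain ⟨f, g, h, hf, hg, rfl, hDf, hDg⟩ := exists_num_den_of_derivation_eq_zero hD' hu0 hu
  obtain ⟨γ₁, d₁, rfl, rfl⟩ := exists_eq_C_mul_X_pow_of_derivation_apply_eq_mul hb hD hf hDf
  obtain ⟨γ₂, d₂, rfl, hd⟩ := exists_eq_C_mul_X_pow_of_derivation_apply_eq_mul hb hD hg hDg
  obtain rfl : d₁ = d₂ := by
    have := mul_right_cancel₀ hb (Polynomial.C_injective ((AlgEquiv.injective _) hd))
    exact_mod_cast this
  refine ⟨γ₁ / γ₂, ?_⟩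
  rw [map_mul, map_mul, map_pow, mul_div_mul_right _ _ (pow_ne_zero _ ?_),
    algebraMap_mvPolynomial_C, algebraMap_mvPolynomial_C, map_div₀]
  exact (map_ne_zero_iff _ (IsFractionRing.injective _ K)).2 (X_ne_zero _)

end FractionField

open MvPolynomial

/-- **Lemma 4.2.** Let `k` be a field of characteristic zero, `m, n ≥ 0` and `a ∈ k*`.
Let `D = ∂x + a x^m y^(n+1) ∂y` on `k[x,y]`, extended to the rational function field
`K = k(x,y)` (the extension `D'` is pinned down by compatibility with `D`).  Then
`k(x,y)^D = k` iff `n = 0`. -/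
theorem rational_kernel_trivial_iff_n_eq_zero
    (k : Type*) [Field k] [CharZero k]
    (K : Type*) [Field K] [Algebra (MvPolynomial (Fin 2) k) K]
    [IsFractionRing (MvPolynomial (Fin 2) k) K]
    [Algebra k K] [IsScalarTower k (MvPolynomial (Fin 2) k) K]
    (m n : ℕ) (a : k) (ha : a ≠ 0)
    (D : Derivation k (MvPolynomial (Fin 2) k) (MvPolynomial (Fin 2) k))
    (hD : D = pderiv 0 + (C a * X 0 ^ m * X 1 ^ (n + 1) : MvPolynomial (Fin 2) k) • pderiv 1)
    (D' : Derivation k K K)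
    (hD' : ∀ p : MvPolynomial (Fin 2) k,
      D' (algebraMap (MvPolynomial (Fin 2) k) K p)
        = algebraMap (MvPolynomial (Fin 2) k) K (D p)) :
    (∀ u : K, D' u = 0 ↔ ∃ c : k, u = algebraMap k K c) ↔ n = 0 := by
  constructor
  · intro hker
    by_contra hn
    obtain ⟨u, hu, hne⟩ := exists_derivation_eq_zero_ne_algebraMap hn a hD hD'
    obtain ⟨c, rfl⟩ := (hker u).1 hu
    exact hne c rfl
  · rintro rfl u
    refine ⟨exists_eq_algebraMap_of_derivation_eq_zero (b := Polynomial.C a * Polynomial.X ^ m)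
      (by simpa using ha) (hD.trans (by simp)) hD', ?_⟩
    rintro ⟨c, rfl⟩
    exact D'.map_algebraMap c
end

section
/- Let k be a field of characteristic zero, let a ∈ k*, let m, n ∈ ℤ_{≥0} with m ≤ n, and let D be the k-derivation on k[x,y] given by D = x^{m+1} ∂/∂x + a·y^{n+1} ∂/∂y, extended to k(x,y). If k(x,y)^D ≠ k, then either (1) m > 0 and n > 0, or (2) m = n = 0 and a ∈ ℚ \ {0} (i.e., a is a nonzero rational number viewed in k). -/
/-!
Assume `m = 0` (otherwise `0 < m ≤ n`). A nonconstant rational first integral `f / g` in lowest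
terms gives coprime `f, g` with `D f = h f` and `D g = h g` for a common cofactor `h`. Write
`k[x, y] = k[y][x]`: since `D` does not raise the degree in `x`, `h` lies in `k[y]`, and the
`x^i`-coefficients `q` of `f` and `g` satisfy `a y^(n+1) q' = (h - i) q`. If `n > 0`, comparing
lowest-order terms in `y` gives `h(0) = i`; if `n = 0`, comparing top-degree terms gives
`h = i + a deg q`, which for irrational `a` determines `i`. Either way all nonzero `x`-coefficients
of `f` and `g` sit in a single degree, which coprimality forces to be `0`. Then `f, g ∈ k[y]` have
vanishing Wronskian, so being coprime they are constants, and `f / g ∈ k`.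
-/

noncomputable section

open Polynomial

section OneVariable

variable {R : Type*} [CommRing R]

theorem Polynomial.coeff_X_mul_derivative (q : R[X]) (j : ℕ) :
    (X * derivative q).coeff j = j * q.coeff j := by
  rcases j with _ | j
  · simp
  · rw [coeff_X_mul, coeff_derivative]
    push_cast
    ring

theorem Polynomial.natTrailingDegree_le_natTrailingDegree_derivative_add_one {q : R[X]}
    (hq : derivative q ≠ 0) : q.natTrailingDegree ≤ (derivative q).natTrailingDegree + 1 := by
  apply natTrailingDegree_le_of_ne_zero
  have h := trailingCoeff_nonzero_iff_nonzero.mpr hq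
  rw [trailingCoeff, coeff_derivative] at h
  exact left_ne_zero_of_mul h

variable [IsDomain R]

theorem Polynomial.coeff_zero_eq_zero_of_mul_eq_C_mul_X_pow_mul_derivative {n : ℕ} (hn : 0 < n)
    {a : R} {p q : R[X]} (hq : q ≠ 0) (h : p * q = C a * X ^ (n + 1) * derivative q) :
    p.coeff 0 = 0 := by
  by_contra hp0
  have hp : p ≠ 0 := fun hp => hp0 (by simp [hp])
  have hrhs : C a * X ^ (n + 1) * derivative q ≠ 0 := h ▸ mul_ne_zero hp hq
  have ha : C a ≠ 0 := left_ne_zero_of_mul (left_ne_zero_of_mul hrhs)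
  have hq' : derivative q ≠ 0 := right_ne_zero_of_mul hrhs
  have htd := congrArg natTrailingDegree h
  rw [natTrailingDegree_mul hp hq, natTrailingDegree_mul (mul_ne_zero ha (by simp)) hq',
    natTrailingDegree_mul ha (by simp), natTrailingDegree_C, natTrailingDegree_X_pow,
    natTrailingDegree_eq_zero.mpr (Or.inr hp0)] at htd
  have := natTrailingDegree_le_natTrailingDegree_derivative_add_one hq'
  omega

theorem Polynomial.eq_C_of_mul_eq_C_mul_X_mul_derivative {a : R} {p q : R[X]} (hq : q ≠ 0)
    (h : p * q = C a * X * derivative q) : p = C (a * q.natDegree) := by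
  have hp : p.natDegree = 0 := by
    rcases eq_or_ne p 0 with rfl | hp
    · simp
    have hle : (p * q).natDegree ≤ q.natDegree := by
      rw [h, mul_assoc]
      refine natDegree_le_iff_coeff_eq_zero.mpr fun j hj => ?_
      rw [coeff_C_mul, coeff_X_mul_derivative, coeff_eq_zero_of_natDegree_lt hj, mul_zero,
        mul_zero]
    rw [natDegree_mul hp hq] at hle
    omega
  rw [eq_C_of_natDegree_eq_zero hp] at h ⊢
  have hlead := congrArg (coeff · q.natDegree) h
  simp only [mul_assoc, coeff_C_mul, coeff_X_mul_derivative] at hlead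
  rw [← mul_assoc] at hlead
  exact congrArg C (mul_right_cancel₀ (leadingCoeff_ne_zero.mpr hq) hlead)

end OneVariable

section CharZero

variable {k : Type*} [Field k] [CharZero k]

theorem eq_of_natCast_add_mul_natCast_eq {a : k} (ha : ∀ r : ℚ, a ≠ r) {i₁ i₂ j₁ j₂ : ℕ}
    (h : (i₁ : k) + a * j₁ = i₂ + a * j₂) : i₁ = i₂ := by
  obtain rfl : j₁ = j₂ := by
    by_contra hj
    have hj' : (j₁ : k) - j₂ ≠ 0 := sub_ne_zero.mpr (Nat.cast_injective.ne hj)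
    refine ha ((i₂ - i₁ : ℚ) / (j₁ - j₂)) ?_
    push_cast
    rw [eq_div_iff hj']
    linear_combination h
  exact_mod_cast add_right_cancel h

theorem Polynomial.eq_of_sub_natCast_mul_eq_C_mul_X_pow_mul_derivative {n : ℕ} {a : k}
    (hna : 0 < n ∨ ∀ r : ℚ, a ≠ r) {h q₁ q₂ : k[X]} {i₁ i₂ : ℕ} (hq₁ : q₁ ≠ 0) (hq₂ : q₂ ≠ 0)
    (h₁ : (h - (i₁ : k[X])) * q₁ = C a * X ^ (n + 1) * derivative q₁)
    (h₂ : (h - (i₂ : k[X])) * q₂ = C a * X ^ (n + 1) * derivative q₂) : i₁ = i₂ := by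
  rcases Nat.eq_zero_or_pos n with rfl | hn
  · rw [pow_one] at h₁ h₂
    have e₁ := congrArg (coeff · 0) (eq_C_of_mul_eq_C_mul_X_mul_derivative hq₁ h₁)
    have e₂ := congrArg (coeff · 0) (eq_C_of_mul_eq_C_mul_X_mul_derivative hq₂ h₂)
    simp only [coeff_sub, coeff_natCast_ite, coeff_C_zero, if_true] at e₁ e₂
    refine eq_of_natCast_add_mul_natCast_eq (j₁ := q₁.natDegree) (j₂ := q₂.natDegree)
      (hna.resolve_left (lt_irrefl 0)) ?_
    linear_combination e₂ - e₁
  · have e₁ := coeff_zero_eq_zero_of_mul_eq_C_mul_X_pow_mul_derivative hn hq₁ h₁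
    have e₂ := coeff_zero_eq_zero_of_mul_eq_C_mul_X_pow_mul_derivative hn hq₂ h₂
    simp only [coeff_sub, coeff_natCast_ite, if_true, sub_eq_zero] at e₁ e₂
    exact_mod_cast e₁.symm.trans e₂

end CharZero

theorem IsRelPrime.eq_C_of_coeff_ne_zero_imp_eq {R : Type*} [CommSemiring R] [Nontrivial R]
    {F G : R[X]} (hFG : IsRelPrime F G) {d : ℕ} (hF : ∀ i, F.coeff i ≠ 0 → i = d)
    (hG : ∀ i, G.coeff i ≠ 0 → i = d) : F = C (F.coeff 0) ∧ G = C (G.coeff 0) := by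
  obtain rfl : d = 0 := by
    by_contra hd
    have hX : ∀ P : R[X], (∀ i, P.coeff i ≠ 0 → i = d) → X ∣ P := fun P hP =>
      X_dvd_iff.mpr (by_contra fun h => hd (hP 0 h).symm)
    exact not_isUnit_X (hFG (hX F hF) (hX G hG))
  have hC : ∀ P : R[X], (∀ i, P.coeff i ≠ 0 → i = 0) → P = C (P.coeff 0) := fun P hP =>
    eq_C_of_natDegree_le_zero <| natDegree_le_iff_coeff_eq_zero.mpr fun N hN =>
      by_contra fun h => hN.ne' (hP N h)
  exact ⟨hC F hF, hC G hG⟩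

def Polynomial.coeffDerivative (R : Type*) [CommRing R] : Derivation R R[X][X] R[X][X] :=
  PolynomialModule.equivPolynomialSelf.compDer (derivative' (R := R)).mapCoeffs

@[simp]
theorem Polynomial.coeff_coeffDerivative {R : Type*} [CommRing R] (F : R[X][X]) (i : ℕ) :
    (coeffDerivative R F).coeff i = derivative (F.coeff i) :=
  rfl

@[simp]
theorem Polynomial.coeffDerivative_X {R : Type*} [CommRing R] : coeffDerivative R X = 0 := by
  ext i : 1
  simp [coeff_X, apply_ite]

@[simp]
theorem Polynomial.coeffDerivative_C {R : Type*} [CommRing R] (p : R[X]) :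
    coeffDerivative R (C p) = C (derivative p) := by
  ext i : 1
  rcases i with _ | i <;> simp

/-- The derivation `x ∂/∂x + a y^(n+1) ∂/∂y` of `k[y][x]`. -/
def xDxAddYPowDy (R : Type*) [CommRing R] (n : ℕ) (a : R) : Derivation R R[X][X] R[X][X] :=
  (X : R[X][X]) • (derivative' (R := R[X])).restrictScalars R
    + C (C a * X ^ (n + 1)) • coeffDerivative R

section xDxAddYPowDy

variable {R : Type*} [CommRing R] {n : ℕ} {a : R}

theorem coeff_xDxAddYPowDy (F : R[X][X]) (i : ℕ) :
    (xDxAddYPowDy R n a F).coeff i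
      = (i : R[X]) * F.coeff i + C a * X ^ (n + 1) * derivative (F.coeff i) := by
  simp only [xDxAddYPowDy, Derivation.add_apply, Derivation.smul_apply, smul_eq_mul,
    Derivation.restrictScalars_apply, derivative'_apply, coeff_add, coeff_C_mul,
    coeff_coeffDerivative, coeff_X_mul_derivative]

theorem natDegree_xDxAddYPowDy_le (F : R[X][X]) :
    (xDxAddYPowDy R n a F).natDegree ≤ F.natDegree :=
  natDegree_le_iff_coeff_eq_zero.mpr fun N hN => by
    simp [coeff_xDxAddYPowDy, coeff_eq_zero_of_natDegree_lt hN]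

theorem eq_C_of_xDxAddYPowDy_eq_mul [IsDomain R] {G H : R[X][X]} (hG : G ≠ 0)
    (hGH : xDxAddYPowDy R n a G = G * H) : H = C (H.coeff 0) := by
  refine eq_C_of_natDegree_eq_zero ?_
  rcases eq_or_ne H 0 with rfl | hH
  · simp
  have hle := natDegree_xDxAddYPowDy_le (n := n) (a := a) G
  rw [hGH, natDegree_mul hG hH] at hle
  omega

theorem sub_natCast_mul_coeff_eq_of_xDxAddYPowDy_eq_mul_C {F : R[X][X]} {h : R[X]}
    (hF : xDxAddYPowDy R n a F = F * C h) (i : ℕ) :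
    (h - (i : R[X])) * F.coeff i = C a * X ^ (n + 1) * derivative (F.coeff i) := by
  have hi := congrArg (coeff · i) hF
  simp only [coeff_xDxAddYPowDy, coeff_mul_C] at hi
  linear_combination -hi

end xDxAddYPowDy

theorem eq_C_C_of_isRelPrime_of_xDxAddYPowDy_eq_mul {k : Type*} [Field k] [CharZero k] {n : ℕ}
    {a : k} (hna : 0 < n ∨ ∀ r : ℚ, a ≠ r) (ha : a ≠ 0) {F G H : k[X][X]} (hFG : IsRelPrime F G)
    (hG : G ≠ 0) (hFH : xDxAddYPowDy k n a F = F * H) (hGH : xDxAddYPowDy k n a G = G * H) :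
    (∃ α, F = C (C α)) ∧ ∃ β, G = C (C β) := by
  rw [eq_C_of_xDxAddYPowDy_eq_mul hG hGH] at hFH hGH
  have hF' := sub_natCast_mul_coeff_eq_of_xDxAddYPowDy_eq_mul_C hFH
  have hG' := sub_natCast_mul_coeff_eq_of_xDxAddYPowDy_eq_mul_C hGH
  have hsupp : ∀ P : k[X][X], (∀ i : ℕ, (H.coeff 0 - (i : k[X])) * P.coeff i
      = C a * X ^ (n + 1) * derivative (P.coeff i)) → ∀ i : ℕ, P.coeff i ≠ 0 → i = G.natDegree :=
    fun P hP i hi => eq_of_sub_natCast_mul_eq_C_mul_X_pow_mul_derivative hna hi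
      (leadingCoeff_ne_zero.mpr hG) (hP i) (hG' _)
  obtain ⟨hFC, hGC⟩ := hFG.eq_C_of_coeff_ne_zero_imp_eq (hsupp F hF') (hsupp G hG')
  have hcop : IsCoprime (F.coeff 0) (G.coeff 0) := by
    rw [← isRelPrime_iff_isCoprime]
    exact IsRelPrime.of_map C (hFC ▸ hGC ▸ hFG)
  have hW : wronskian (F.coeff 0) (G.coeff 0) = 0 := by
    have hc : C a * X ^ (n + 1) ≠ 0 := mul_ne_zero (C_ne_zero.mpr ha) (pow_ne_zero _ X_ne_zero)
    refine mul_left_cancel₀ hc ?_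
    rw [wronskian, mul_zero]
    linear_combination G.coeff 0 * hF' 0 - F.coeff 0 * hG' 0
  obtain ⟨hF0, hG0⟩ := hcop.wronskian_eq_zero_iff.mp hW
  exact ⟨⟨_, hFC.trans (congrArg C (eq_C_of_derivative_eq_zero hF0))⟩,
    ⟨_, hGC.trans (congrArg C (eq_C_of_derivative_eq_zero hG0))⟩⟩

def mvPolynomialFinTwoEquiv (R : Type*) [CommSemiring R] :
    MvPolynomial (Fin 2) R ≃ₐ[R] R[X][X] :=
  (MvPolynomial.finSuccEquiv R 1).trans <| mapAlgEquiv <|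
    (MvPolynomial.finSuccEquiv R 0).trans <| mapAlgEquiv <| MvPolynomial.isEmptyAlgEquiv R (Fin 0)

@[simp]
theorem mvPolynomialFinTwoEquiv_X_zero (R : Type*) [CommSemiring R] :
    mvPolynomialFinTwoEquiv R (MvPolynomial.X 0) = X := by
  simp [mvPolynomialFinTwoEquiv, MvPolynomial.finSuccEquiv_X_zero]

@[simp]
theorem mvPolynomialFinTwoEquiv_X_one (R : Type*) [CommSemiring R] :
    mvPolynomialFinTwoEquiv R (MvPolynomial.X 1) = C X := by
  rw [mvPolynomialFinTwoEquiv, show (1 : Fin 2) = Fin.succ 0 from rfl, AlgEquiv.trans_apply,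
    MvPolynomial.finSuccEquiv_X_succ]
  simp [MvPolynomial.finSuccEquiv_X_zero]

@[simp]
theorem mvPolynomialFinTwoEquiv_C (R : Type*) [CommSemiring R] (a : R) :
    mvPolynomialFinTwoEquiv R (MvPolynomial.C a) = C (C a) :=
  (mvPolynomialFinTwoEquiv R).commutes a

theorem mvPolynomialFinTwoEquiv_eq_C_C_iff {R : Type*} [CommSemiring R]
    {p : MvPolynomial (Fin 2) R} {a : R} :
    mvPolynomialFinTwoEquiv R p = C (C a) ↔ p = MvPolynomial.C a := by
  rw [← mvPolynomialFinTwoEquiv_C, (mvPolynomialFinTwoEquiv R).injective.eq_iff]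

def Derivation.conjAlgEquiv {R A B : Type*} [CommSemiring R] [CommSemiring A] [CommSemiring B]
    [Algebra R A] [Algebra R B] (d : Derivation R B B) (e : A ≃ₐ[R] B) : Derivation R A A where
  toLinearMap := e.symm.toLinearMap ∘ₗ d.toLinearMap ∘ₗ e.toLinearMap
  map_one_eq_zero' := by simp
  leibniz' a b := by simp

@[simp]
theorem Derivation.conjAlgEquiv_apply {R A B : Type*} [CommSemiring R] [CommSemiring A]
    [CommSemiring B] [Algebra R A] [Algebra R B] (d : Derivation R B B) (e : A ≃ₐ[R] B) (f : A) :
    d.conjAlgEquiv e f = e.symm (d (e f)) :=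
  rfl

theorem xDxAddYPowDy_conjAlgEquiv {R : Type*} [CommRing R] (n : ℕ) (a : R) :
    (xDxAddYPowDy R n a).conjAlgEquiv (mvPolynomialFinTwoEquiv R)
      = (MvPolynomial.X 0 : MvPolynomial (Fin 2) R) • MvPolynomial.pderiv 0
        + (MvPolynomial.C a * MvPolynomial.X 1 ^ (n + 1) : MvPolynomial (Fin 2) R) •
          MvPolynomial.pderiv 1 := by
  refine MvPolynomial.derivation_ext fun i => ?_
  rw [Derivation.conjAlgEquiv_apply, AlgEquiv.symm_apply_eq]
  fin_cases i <;> simp [xDxAddYPowDy]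

theorem Derivation.exists_isRelPrime_cofactor_of_apply_eq_zero {R A K : Type*} [CommSemiring R]
    [CommRing A] [IsDomain A] [UniqueFactorizationMonoid A] [Algebra R A] [Field K] [Algebra A K]
    [IsFractionRing A K] [Algebra R K] (D : Derivation R A A) (D' : Derivation R K K)
    (hD' : ∀ p, D' (algebraMap A K p) = algebraMap A K (D p)) {u : K} (hu : D' u = 0) :
    ∃ f g h : A, IsRelPrime f g ∧ g ≠ 0 ∧ u = algebraMap A K f / algebraMap A K g ∧
      D f = f * h ∧ D g = g * h := by
  obtain ⟨f₀, g₀, hg₀, rfl⟩ := IsFractionRing.div_surjective (A := A) u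
  obtain ⟨f, g, c, hfg, rfl, rfl⟩ :=
    UniqueFactorizationMonoid.exists_reduced_factors' f₀ g₀ (nonZeroDivisors.ne_zero hg₀)
  have hc : c ≠ 0 := left_ne_zero_of_mul (nonZeroDivisors.ne_zero hg₀)
  have hg : g ≠ 0 := right_ne_zero_of_mul (nonZeroDivisors.ne_zero hg₀)
  have hinj := IsFractionRing.injective A K
  have hg' : algebraMap A K g ≠ 0 := (map_ne_zero_iff _ hinj).mpr hg
  rw [map_mul, map_mul, mul_div_mul_left _ _ ((map_ne_zero_iff _ hinj).mpr hc)] at hu ⊢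
  have hcross : D f * g = f * D g := by
    apply hinj
    have h := congrArg D' (div_mul_cancel₀ (algebraMap A K f) hg')
    rw [Derivation.leibniz, hu, smul_zero, add_zero, hD', hD', smul_eq_mul] at h
    rw [map_mul, map_mul, ← h]
    field_simp
  obtain ⟨h, hh⟩ := hfg.symm.dvd_of_dvd_mul_left ⟨D f, by rw [← hcross, mul_comm]⟩
  refine ⟨f, g, h, hfg, hg, rfl, mul_right_cancel₀ hg ?_, hh⟩
  rw [hcross, hh]
  ring

end

open MvPolynomial

/-- **Lemma 4.3.** Let `k` be a field of characteristic zero, `a ∈ k*`, `m, n ≥ 0` with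
`m ≤ n`, and `D = x^(m+1) ∂x + a y^(n+1) ∂y` on `k[x,y]`, extended to the rational
function field `K = k(x,y)` (the extension `D'` is pinned down by compatibility with `D`).
If `k(x,y)^D ≠ k`, then either `m, n > 0`, or `m = n = 0` and `a` is a nonzero rational
number (viewed in `k`). -/
theorem rational_kernel_nontrivial_cases
    (k : Type*) [Field k] [CharZero k]
    (K : Type*) [Field K] [Algebra (MvPolynomial (Fin 2) k) K]
    [IsFractionRing (MvPolynomial (Fin 2) k) K]
    [Algebra k K] [IsScalarTower k (MvPolynomial (Fin 2) k) K]
    (m n : ℕ) (hmn : m ≤ n) (a : k) (ha : a ≠ 0)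
    (D : Derivation k (MvPolynomial (Fin 2) k) (MvPolynomial (Fin 2) k))
    (hD : D = (X 0 ^ (m + 1) : MvPolynomial (Fin 2) k) • pderiv 0
              + (C a * X 1 ^ (n + 1) : MvPolynomial (Fin 2) k) • pderiv 1)
    (D' : Derivation k K K)
    (hD' : ∀ p : MvPolynomial (Fin 2) k,
      D' (algebraMap (MvPolynomial (Fin 2) k) K p)
        = algebraMap (MvPolynomial (Fin 2) k) K (D p))
    (hker' : ∃ u : K, D' u = 0 ∧ ∀ c : k, u ≠ algebraMap k K c) :
    (0 < m ∧ 0 < n) ∨ (m = 0 ∧ n = 0 ∧ ∃ q : ℚ, q ≠ 0 ∧ a = (q : k)) := by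
  rcases Nat.eq_zero_or_pos m with rfl | hm
  swap
  · exact Or.inl ⟨hm, hm.trans_le hmn⟩
  refine Or.inr ⟨rfl, ?_⟩
  by_contra hcases
  have hna : 0 < n ∨ ∀ r : ℚ, a ≠ r := by
    refine (Nat.eq_zero_or_pos n).symm.imp_right fun hn r har => hcases ⟨hn, r, ?_, har⟩
    rintro rfl
    exact ha (by simpa using har)
  obtain ⟨u, hu, hu_const⟩ := hker'
  obtain ⟨f, g, h, hfg, hg, rfl, hf, hgh⟩ :=
    D.exists_isRelPrime_cofactor_of_apply_eq_zero D' hD' hu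
  set e := mvPolynomialFinTwoEquiv k
  have he : ∀ p, e (D p) = xDxAddYPowDy k n a (e p) := fun p => by
    rw [hD, zero_add, pow_one, ← xDxAddYPowDy_conjAlgEquiv, Derivation.conjAlgEquiv_apply,
      AlgEquiv.apply_symm_apply]
  have hefg : IsRelPrime (e f) (e g) := .of_map e.symm (by simpa using hfg)
  obtain ⟨⟨α, hα⟩, β, hβ⟩ := eq_C_C_of_isRelPrime_of_xDxAddYPowDy_eq_mul hna ha hefg
    (by simpa using hg) (by rw [← he, hf, map_mul]) (by rw [← he, hgh, map_mul])
  obtain rfl := mvPolynomialFinTwoEquiv_eq_C_C_iff.mp hα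
  obtain rfl := mvPolynomialFinTwoEquiv_eq_C_C_iff.mp hβ
  refine hu_const (α / β) ?_
  rw [← MvPolynomial.algebraMap_eq, ← IsScalarTower.algebraMap_apply,
    ← IsScalarTower.algebraMap_apply, map_div₀]
end
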